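/- arXiv:math/0605331 — 8 statements merged into one kernel-verified Lean document; each statement's English description precedes it below -/
import Mathlib

section
/- A pair of words w_1, w_2 in the free semigroup F_q generated by the primitive shifts is irreducible (i.e., they do not share a common leftmost primitive shift factor) if and only if there exists a node t ∈ T with (tw_1) ∧ (tw_2) = t; moreover in that case (tw_1) ∧ (tw_2) = t holds for all t ∈ T. -/
open scoped InnerProductSpace ENNReal
open ContinuousLinearMap (adjoint)

noncomputable section

namespace Multiscale

/-- A homogeneous tree of order `q` with a distinguished boundary point `∞`,
encoded by the `q` primitive shift maps (the right action `t ↦ t·αⱼ`, giving the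
`q` successors of a node) together with the parent map (the first step of the
unique path from a node towards the boundary point `∞`).  The axioms say:
the shifts are jointly injective, `t·αⱼ` has parent `t`, every node is a
successor of its parent, the parent map has no cycles (acyclicity of the tree)
and the paths from any two nodes to `∞` eventually merge (connectedness and the
choice of one common boundary point). -/
structure HomTree (q : ℕ) (T : Type) where
  shift : Fin q → T → T
  parent : T → T
  shift_inj : ∀ i j s t, shift i s = shift j t → i = j ∧ s = t
  parent_shift : ∀ j t, parent (shift j t) = t
  shift_parent : ∀ t, ∃ j, shift j (parent t) = t
  acyclic : ∀ t n, parent^[n] t = t → n = 0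
  connected : ∀ s t, ∃ m n, parent^[m] s = parent^[n] t

variable {q : ℕ} {T : Type} [DecidableEq T]

/-- The partial order `s ⪯ t` induced by the boundary point:
`dist(s, s ∧ t) ≤ dist(t, s ∧ t)`. -/
def HomTree.ple (S : HomTree q T) (s t : T) : Prop :=
  ∃ m n, m ≤ n ∧ S.parent^[m] s = S.parent^[n] t

/-- The horocycle equivalence `s ≍ t` : `dist(s, s ∧ t) = dist(t, s ∧ t)`. -/
def HomTree.horo (S : HomTree q T) (s t : T) : Prop :=
  ∃ n, S.parent^[n] s = S.parent^[n] t

/-- The right action `t ↦ t·w` of a word `w ∈ F_q` on the tree. -/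
def HomTree.act (S : HomTree q T) : List (Fin q) → T → T
  | [], t => t
  | i :: w, t => S.act w (S.shift i t)

/-- `ℓ²(T)`. -/
abbrev L2 (T : Type) : Type := lp (fun _ : T => ℂ) 2

/-- The operator on `ℓ²` associated with a word `w ∈ F_q`, built from the
operators of the primitive shifts: `(w f)(t) = f(t·w)`. -/
def wordOp {q : ℕ} {H : Type} [NormedAddCommGroup H] [NormedSpace ℂ H]
    (A : Fin q → (H →L[ℂ] H)) : List (Fin q) → (H →L[ℂ] H)
  | [] => 1
  | i :: w => A i ∘L wordOp A w

/-- A bounded operator on `ℓ²(T)` is causal if whenever `f` vanishes on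
`{t : t ⪯ s}` so does `Xf`. -/
def Causal (S : HomTree q T) (X : L2 T →L[ℂ] L2 T) : Prop :=
  ∀ s : T, ∀ f : L2 T, (∀ t, S.ple t s → f t = 0) → ∀ t, S.ple t s → X f t = 0

/-- A constant: both `X` and `X*` are causal. -/
def IsConst (S : HomTree q T) (X : L2 T →L[ℂ] L2 T) : Prop :=
  Causal S X ∧ Causal S (adjoint X)

/-- Diagonal with respect to the standard basis `χ_t`. -/
def IsDiagonal (X : L2 T →L[ℂ] L2 T) : Prop :=
  ∀ t : T, ∃ a : ℂ, X (lp.single 2 t 1) = a • lp.single 2 t 1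

/-- A pair of words of `F_q` is irreducible if it is not of the form
`(αᵢ v₁, αᵢ v₂)`. -/
def Irred {q : ℕ} (w₁ w₂ : List (Fin q)) : Prop :=
  ¬ ∃ (i : Fin q) (v₁ v₂ : List (Fin q)), w₁ = i :: v₁ ∧ w₂ = i :: v₂

/-- Membership in the Hilbert--Schmidt class: `trace (X*X) = Σ_t ‖X χ_t‖² < ∞`. -/
def HSSummable (X : L2 T →L[ℂ] L2 T) : Prop :=
  Summable fun t : T => ‖X (lp.single 2 t 1)‖ ^ 2

/-- The Hilbert--Schmidt norm `‖X‖₂ = (trace (X*X))^{1/2}`. -/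
def hsNorm (X : L2 T →L[ℂ] L2 T) : ℝ :=
  Real.sqrt (∑' t : T, ‖X (lp.single 2 t 1)‖ ^ 2)

/-- The Hilbert--Schmidt inner product `⟨X, Y⟩₂ = trace (Y* X)`
(linear in `X`, conjugate-linear in `Y`). -/
def hsInner (X Y : L2 T →L[ℂ] L2 T) : ℂ :=
  ∑' t : T, ⟪Y (lp.single 2 t 1), X (lp.single 2 t 1)⟫_ℂ


/-- `u` is the meet `s ∧ t`: the first common node of the paths from `s` and
from `t` to the boundary point `∞`. -/
def HomTree.IsMeet (S : HomTree q T) (s t u : T) : Prop :=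
  (∃ m, S.parent^[m] s = u) ∧ (∃ n, S.parent^[n] t = u) ∧
    ∀ u', (∃ m, S.parent^[m] s = u') → (∃ n, S.parent^[n] t = u') →
      ∃ k, S.parent^[k] u = u'

lemma act_append (S : HomTree q T) (u v : List (Fin q)) (t : T) :
    S.act (u ++ v) t = S.act v (S.act u t) := by
  induction u generalizing t with
  | nil => rfl
  | cons i u ih => simp [HomTree.act, ih]

lemma parent_iterate_act (S : HomTree q T) (w : List (Fin q)) (t : T) :
    S.parent^[w.length] (S.act w t) = t := by
  induction w generalizing t with
  | nil => rfl
  | cons i w ih =>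
    show S.parent^[w.length + 1] (S.act w (S.shift i t)) = t
    rw [Function.iterate_succ_apply', ih, S.parent_shift]

lemma act_eq_self (S : HomTree q T) {w : List (Fin q)} {t : T} (h : S.act w t = t) :
    w = [] := by
  have h2 := parent_iterate_act S w t
  rw [h] at h2
  exact List.eq_nil_of_length_eq_zero (S.acyclic t w.length h2)

lemma act_inj (S : HomTree q T) : ∀ (v₁ v₂ : List (Fin q)) (t : T),
    S.act v₁ t = S.act v₂ t → v₁ = v₂ := by
  intro v₁
  induction v₁ using List.reverseRecOn with
  | nil => intro v₂ t h; exact (act_eq_self S h.symm).symm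
  | append_singleton u i ih =>
    intro v₂ t h
    rcases v₂.eq_nil_or_concat with rfl | ⟨u', j, rfl⟩
    · exact absurd (act_eq_self S h) (by simp)
    · rw [List.concat_eq_append] at h ⊢
      rw [act_append, act_append] at h
      simp only [HomTree.act] at h
      obtain ⟨hij, hu⟩ := S.shift_inj i j _ _ h
      rw [ih u' t hu, hij]

lemma parent_iterate_act_ge (S : HomTree q T) (w : List (Fin q)) (t : T) {m : ℕ}
    (h : w.length ≤ m) : S.parent^[m] (S.act w t) = S.parent^[m - w.length] t := by
  conv_lhs => rw [← Nat.sub_add_cancel h]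
  rw [Function.iterate_add_apply, parent_iterate_act]

lemma parent_iterate_act_le (S : HomTree q T) (w : List (Fin q)) (t : T) {k : ℕ}
    (h : k ≤ w.length) :
    S.parent^[k] (S.act w t) = S.act (w.take (w.length - k)) t := by
  set n := w.length - k with hn
  have hw : w = w.take n ++ w.drop n := (List.take_append_drop n w).symm
  have hlen : (w.drop n).length = k := by
    rw [List.length_drop]; omega
  conv_lhs => rw [hw]
  rw [act_append, ← hlen, parent_iterate_act]

/-- A pair of words `w₁, w₂ ∈ F_q` is irreducible (no common
leftmost primitive shift factor) if and only if there exists a node `t` with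
`(t·w₁) ∧ (t·w₂) = t`; moreover, in that case `(t·w₁) ∧ (t·w₂) = t` holds for
all nodes `t`. -/
theorem irreducible_iff_meet {q : ℕ} (hq : 1 ≤ q) {T : Type} [DecidableEq T] [Nonempty T]
    (S : HomTree q T) (w₁ w₂ : List (Fin q)) :
    (Irred w₁ w₂ ↔ ∃ t : T, S.IsMeet (S.act w₁ t) (S.act w₂ t) t) ∧
      (Irred w₁ w₂ → ∀ t : T, S.IsMeet (S.act w₁ t) (S.act w₂ t) t) := by
  have main : Irred w₁ w₂ → ∀ t : T, S.IsMeet (S.act w₁ t) (S.act w₂ t) t := by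
    intro hir t
    refine ⟨⟨w₁.length, parent_iterate_act S w₁ t⟩,
      ⟨w₂.length, parent_iterate_act S w₂ t⟩, ?_⟩
    rintro u' ⟨m, hm⟩ ⟨n, hn⟩
    by_cases h1 : w₁.length ≤ m
    · exact ⟨m - w₁.length, by rw [← hm, parent_iterate_act_ge S w₁ t h1]⟩
    by_cases h2 : w₂.length ≤ n
    · exact ⟨n - w₂.length, by rw [← hn, parent_iterate_act_ge S w₂ t h2]⟩
    push_neg at h1 h2
    exfalso
    rw [parent_iterate_act_le S w₁ t h1.le] at hm
    rw [parent_iterate_act_le S w₂ t h2.le] at hn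
    have heq := act_inj S _ _ t (hm.trans hn.symm)
    obtain ⟨a, w₁', rfl⟩ : ∃ a w₁', w₁ = a :: w₁' := by
      cases w₁ with
      | nil => simp at h1
      | cons a l => exact ⟨a, l, rfl⟩
    obtain ⟨b, w₂', rfl⟩ : ∃ b w₂', w₂ = b :: w₂' := by
      cases w₂ with
      | nil => simp at h2
      | cons b l => exact ⟨b, l, rfl⟩
    obtain ⟨c₁, hc₁⟩ : ∃ c, (a :: w₁').length - m = c + 1 :=
      ⟨(a :: w₁').length - m - 1, by simp only [List.length_cons] at h1 ⊢; omega⟩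
    obtain ⟨c₂, hc₂⟩ : ∃ c, (b :: w₂').length - n = c + 1 :=
      ⟨(b :: w₂').length - n - 1, by simp only [List.length_cons] at h2 ⊢; omega⟩
    rw [hc₁, hc₂, List.take_succ_cons, List.take_succ_cons] at heq
    have hab : a = b := by injection heq
    exact hir ⟨a, w₁', w₂', rfl, by rw [hab]⟩
  refine ⟨⟨fun h => ⟨Classical.arbitrary T, main h _⟩, ?_⟩, main⟩
  rintro ⟨t, hmeet⟩ ⟨i, v₁, v₂, rfl, rfl⟩
  obtain ⟨k, hk⟩ := hmeet.2.2 (S.shift i t)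
    ⟨v₁.length, parent_iterate_act S v₁ (S.shift i t)⟩
    ⟨v₂.length, parent_iterate_act S v₂ (S.shift i t)⟩
  have : S.parent^[k + 1] t = t := by
    rw [Function.iterate_succ_apply', hk, S.parent_shift]
  exact Nat.succ_ne_zero k (S.acyclic t (k + 1) this)
end Multiscale
end
end

section
/- Let S ∈ B(ℓ²(T)) admit a pointwise absolutely convergent representation S = Σ′_{w_1,w_2} w_1* w_2 S_{w_1,w_2} over irreducible pairs, with diagonal coefficients S_{w_1,w_2} normalized so that S_{w_1,w_2}χ_r = 0 for r ∉ T·w_2. Then S is causal if and only if S_{w_1,w_2} = 0 whenever |w_1| < |w_2|. -/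
open scoped InnerProductSpace ENNReal
open ContinuousLinearMap (adjoint)

noncomputable section

/-!
For an irreducible pair `(w₁, w₂)` and a node `s`, the node `s` is the meet of `s·w₁` and
`s·w₂`, reached from them after `|w₁|` and `|w₂|` steps towards `∞`. Hence `s·w₂ ⪯ s·w₁` exactly
when `|w₂| ≤ |w₁|`, and the triple `(s, w₁, w₂)` is recovered from the pair of nodes
`(s·w₁, s·w₂)`. On basis vectors the terms of the representation act by
`w₁* w₂ D χ_{s·w₂} = D_{s·w₂} χ_{s·w₁}` and vanish on `χ_r` for `r ∉ T·w₂`, so every matrix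
entry `⟨χ_t, X χ_r⟩` is a single coefficient of a single `S_{w₁,w₂}`. Causality says that the
entries with `r ⋠ t` vanish, which by the above are the coefficients with `|w₁| < |w₂|`.
-/

namespace Multiscale

variable {q : ℕ} {T : Type}

namespace HomTree

variable (S : HomTree q T)

theorem iterate_parent_injective {x : T} {m n : ℕ} (h : S.parent^[m] x = S.parent^[n] x) :
    m = n := by
  wlog hmn : m ≤ n generalizing m n
  · exact (this h.symm (le_of_not_ge hmn)).symm
  obtain ⟨d, rfl⟩ := Nat.exists_eq_add_of_le hmn
  rw [Nat.add_comm, Function.iterate_add_apply] at h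
  have := S.acyclic _ d h.symm
  omega

theorem iterate_parent_act (w : List (Fin q)) (s : T) :
    S.parent^[w.length] (S.act w s) = s := by
  induction w generalizing s with
  | nil => rfl
  | cons i w ih => rw [List.length_cons, Function.iterate_succ_apply', act, ih, parent_shift]

theorem act_injective (w : List (Fin q)) : Function.Injective (S.act w) := fun s s' h => by
  simpa only [iterate_parent_act] using congrArg S.parent^[w.length] h

theorem length_eq_of_act_eq {w w' : List (Fin q)} {s : T} (h : S.act w s = S.act w' s) :
    w.length = w'.length :=
  S.iterate_parent_injective (x := S.act w s) <| by
    rw [S.iterate_parent_act, h, S.iterate_parent_act]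

theorem act_left_injective (s : T) : Function.Injective fun w : List (Fin q) => S.act w s := by
  intro w w' h
  induction w generalizing w' s with
  | nil => exact (List.length_eq_zero_iff.1 (S.length_eq_of_act_eq h).symm).symm
  | cons i w ih =>
    obtain ⟨i', w', rfl⟩ := List.exists_cons_of_length_pos
      ((S.length_eq_of_act_eq h).symm ▸ List.length_pos_of_ne_nil (List.cons_ne_nil i w))
    have hlen : w.length = w'.length := by simpa using S.length_eq_of_act_eq h
    have hshift : S.shift i s = S.shift i' s := by
      have := congrArg S.parent^[w.length] h
      simp only [act] at this
      rwa [S.iterate_parent_act, hlen, S.iterate_parent_act] at this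
    obtain ⟨rfl, -⟩ := S.shift_inj _ _ _ _ hshift
    rw [ih _ h]

theorem ple_refl (t : T) : S.ple t t := ⟨0, 0, le_rfl, rfl⟩

theorem ple_trans {a b c : T} (h₁ : S.ple a b) (h₂ : S.ple b c) : S.ple a c := by
  obtain ⟨m, n, hmn, h⟩ := h₁
  obtain ⟨m', n', hmn', h'⟩ := h₂
  refine ⟨m' + m, n + n', by omega, ?_⟩
  rw [Function.iterate_add_apply, h, ← Function.iterate_add_apply, Nat.add_comm m' n,
    Function.iterate_add_apply, h', ← Function.iterate_add_apply]

variable {S}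

-- Going up from `s·w₂` less than `|w₂|` steps we stay strictly inside the branch at `s`
-- starting with the first letter of `w₂`, which irreducibility keeps apart from `s·w₁`.
theorem length_le_of_iterate_parent_eq {w₁ w₂ : List (Fin q)} (hirr : Irred w₁ w₂) {s : T}
    {m n : ℕ} (h : S.parent^[m] (S.act w₂ s) = S.parent^[n] (S.act w₁ s)) :
    w₂.length ≤ m := by
  by_contra! hm
  obtain ⟨i₂, v₂, rfl⟩ := List.exists_cons_of_length_pos (by omega : 0 < w₂.length)
  obtain ⟨d, hd⟩ : ∃ d, v₂.length = d + m := ⟨v₂.length - m, by simp at hm; omega⟩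
  have h₂ : S.parent^[d + n] (S.act w₁ s) = S.shift i₂ s := by
    rw [Function.iterate_add_apply, ← h, ← Function.iterate_add_apply, ← hd]
    exact S.iterate_parent_act v₂ _
  have hlen : w₁.length = d + n + 1 := S.iterate_parent_injective (x := S.act w₁ s) <| by
    rw [S.iterate_parent_act, Function.iterate_succ_apply', h₂, parent_shift]
  obtain ⟨i₁, v₁, rfl⟩ := List.exists_cons_of_length_pos (by omega : 0 < w₁.length)
  have h₁ : S.parent^[d + n] (S.act (i₁ :: v₁) s) = S.shift i₁ s := by
    rw [show d + n = v₁.length by simp at hlen; omega]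
    exact S.iterate_parent_act v₁ _
  obtain ⟨rfl, -⟩ := S.shift_inj _ _ _ _ (h₁.symm.trans h₂)
  exact hirr ⟨i₁, v₁, v₂, rfl, rfl⟩

theorem exists_eq_add_of_iterate_parent_eq {w₁ w₂ : List (Fin q)} (hirr : Irred w₁ w₂) {s : T}
    {m n : ℕ} (h : S.parent^[m] (S.act w₂ s) = S.parent^[n] (S.act w₁ s)) :
    ∃ k, m = w₂.length + k ∧ n = w₁.length + k := by
  obtain ⟨k, rfl⟩ := Nat.exists_eq_add_of_le (length_le_of_iterate_parent_eq hirr h)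
  refine ⟨k, rfl, S.iterate_parent_injective (x := S.act w₁ s) ?_⟩
  rw [← h, Nat.add_comm, Function.iterate_add_apply, S.iterate_parent_act, Nat.add_comm,
    Function.iterate_add_apply, S.iterate_parent_act]

theorem ple_act_iff {w₁ w₂ : List (Fin q)} (hirr : Irred w₁ w₂) (s : T) :
    S.ple (S.act w₂ s) (S.act w₁ s) ↔ w₂.length ≤ w₁.length := by
  constructor
  · rintro ⟨m, n, hmn, h⟩
    obtain ⟨k, rfl, rfl⟩ := exists_eq_add_of_iterate_parent_eq hirr h
    omega
  · exact fun h => ⟨_, _, h, by rw [S.iterate_parent_act, S.iterate_parent_act]⟩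

theorem eq_of_act_eq {w₁ w₂ w₁' w₂' : List (Fin q)} (hirr : Irred w₁ w₂)
    (hirr' : Irred w₁' w₂') {s s' : T} (h₁ : S.act w₁' s' = S.act w₁ s)
    (h₂ : S.act w₂' s' = S.act w₂ s) : w₁' = w₁ ∧ w₂' = w₂ ∧ s' = s := by
  obtain ⟨k, hk, -⟩ := exists_eq_add_of_iterate_parent_eq hirr (m := w₂'.length)
    (n := w₁'.length) (by rw [← h₁, ← h₂, S.iterate_parent_act, S.iterate_parent_act])
  obtain ⟨k', hk', -⟩ := exists_eq_add_of_iterate_parent_eq hirr' (m := w₂.length)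
    (n := w₁.length) (by rw [h₁, h₂, S.iterate_parent_act, S.iterate_parent_act])
  have hs : s' = s := calc
    s' = S.parent^[w₂'.length] (S.act w₂' s') := (S.iterate_parent_act _ _).symm
    _ = S.parent^[w₂.length] (S.act w₂ s) := by rw [h₂, hk, (by omega : k = 0), Nat.add_zero]
    _ = s := S.iterate_parent_act _ _
  subst hs
  exact ⟨S.act_left_injective s' h₁, S.act_left_injective s' h₂, rfl⟩

end HomTree

section

variable [DecidableEq T]

theorem hasSum_apply_single (X : L2 T →L[ℂ] L2 T) (f : L2 T) (t : T) :
    HasSum (fun r => f r * X (lp.single 2 r 1) t) (X f t) := by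
  have hsingle (r : T) : (lp.single 2 r (f r) : L2 T) = f r • lp.single 2 r 1 := by
    rw [← lp.single_smul, smul_eq_mul, mul_one]
  have hsum := ((lp.evalCLM ℂ (fun _ : T => ℂ) 2 t).comp X).hasSum
    (lp.hasSum_single ENNReal.ofNat_ne_top f)
  simp only [hsingle, map_smul, smul_eq_mul] at hsum
  exact hsum

theorem eq_zero_of_apply_single_eq_zero {X : L2 T →L[ℂ] L2 T}
    (h : ∀ r, X (lp.single 2 r 1) = 0) : X = 0 := by
  ext f t
  refine (hasSum_apply_single X f t).unique ?_
  simpa only [h, lp.coeFn_zero, Pi.zero_apply, mul_zero, zero_apply] using hasSum_zero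

theorem causal_iff_apply_single_eq_zero (S : HomTree q T) (X : L2 T →L[ℂ] L2 T) :
    Causal S X ↔ ∀ r t, ¬ S.ple r t → X (lp.single 2 r 1) t = 0 := by
  refine ⟨fun hX r t hrt => ?_, fun hX s f hf t hts => ?_⟩
  · refine hX t _ (fun u hu => lp.single_apply_ne 2 r 1 ?_) t (S.ple_refl t)
    rintro rfl
    exact hrt hu
  · have hzero (r : T) : f r * X (lp.single 2 r 1) t = 0 := by
      by_cases hr : S.ple r s
      · rw [hf r hr, zero_mul]
      · rw [hX r t fun hrt => hr (S.ple_trans hrt hts), mul_zero]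
    exact (hasSum_apply_single X f t).unique (by simpa only [hzero] using hasSum_zero)

theorem IsDiagonal.apply_single {D : L2 T →L[ℂ] L2 T} (hD : IsDiagonal D) (r : T) :
    D (lp.single 2 r 1) = D (lp.single 2 r 1) r • lp.single 2 r 1 := by
  obtain ⟨a, ha⟩ := hD r
  rw [ha]
  simp

end

def HomTree.IsShiftFamily (S : HomTree q T) (A : Fin q → (L2 T →L[ℂ] L2 T)) : Prop :=
  ∀ j f t, A j f t = f (S.shift j t)

abbrev IrredPair (q : ℕ) : Type := {p : List (Fin q) × List (Fin q) // Irred p.1 p.2}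

section WordOperators

variable {S : HomTree q T} {A : Fin q → (L2 T →L[ℂ] L2 T)}

theorem wordOp_apply (hA : S.IsShiftFamily A) (w : List (Fin q)) (f : L2 T) (t : T) :
    wordOp A w f t = f (S.act w t) := by
  induction w generalizing t with
  | nil => rfl
  | cons i w ih => exact (hA i _ t).trans (ih _)

variable [DecidableEq T]

theorem wordOp_single_act (hA : S.IsShiftFamily A) (w : List (Fin q)) (s : T) :
    wordOp A w (lp.single 2 (S.act w s) 1) = lp.single 2 s (1 : ℂ) := by
  ext u
  simp only [wordOp_apply hA, lp.single_apply, Pi.single_apply, (S.act_injective w).eq_iff]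

theorem adjoint_wordOp_single (hA : S.IsShiftFamily A) (w : List (Fin q)) (s : T) :
    adjoint (wordOp A w) (lp.single 2 s 1) = lp.single 2 (S.act w s) (1 : ℂ) :=
  ext_inner_right ℂ fun g => by
    rw [ContinuousLinearMap.adjoint_inner_left, lp.inner_single_left, lp.inner_single_left,
      wordOp_apply hA]

theorem adjoint_wordOp_wordOp_single_act (hA : S.IsShiftFamily A) {D : L2 T →L[ℂ] L2 T}
    (hD : IsDiagonal D) (w₁ w₂ : List (Fin q)) (s : T) :
    adjoint (wordOp A w₁) (wordOp A w₂ (D (lp.single 2 (S.act w₂ s) 1))) =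
      D (lp.single 2 (S.act w₂ s) 1) (S.act w₂ s) • lp.single 2 (S.act w₁ s) 1 := by
  conv_lhs => rw [hD.apply_single]
  rw [map_smul, map_smul, wordOp_single_act hA, adjoint_wordOp_single hA]

theorem exists_act_of_adjoint_wordOp_wordOp_single_ne_zero (hA : S.IsShiftFamily A)
    {D : L2 T →L[ℂ] L2 T} (hD : IsDiagonal D) {w₁ w₂ : List (Fin q)}
    (hN : ∀ r, (¬ ∃ s, S.act w₂ s = r) → D (lp.single 2 r 1) = 0) {r t : T}
    (h : adjoint (wordOp A w₁) (wordOp A w₂ (D (lp.single 2 r 1))) t ≠ 0) :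
    ∃ s, S.act w₂ s = r ∧ S.act w₁ s = t := by
  by_cases hr : ∃ s, S.act w₂ s = r
  · obtain ⟨s, rfl⟩ := hr
    refine ⟨s, rfl, by_contra fun ht => h ?_⟩
    rw [adjoint_wordOp_wordOp_single_act hA hD, lp.coeFn_smul, Pi.smul_apply,
      lp.single_apply_ne 2 _ _ (Ne.symm ht), smul_zero]
  · rw [hN r hr, map_zero, map_zero] at h
    exact absurd rfl h

theorem apply_single_act_eq_of_hasSum (hA : S.IsShiftFamily A)
    {Sc : List (Fin q) → List (Fin q) → (L2 T →L[ℂ] L2 T)}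
    (hdiag : ∀ w₁ w₂, IsDiagonal (Sc w₁ w₂))
    (hnormal : ∀ w₁ w₂ (r : T), (¬ ∃ s, S.act w₂ s = r) → Sc w₁ w₂ (lp.single 2 r 1) = 0)
    {w₁ w₂ : List (Fin q)} (hirr : Irred w₁ w₂) (s : T) {x : ℂ}
    (hx : HasSum (fun p : IrredPair q => adjoint (wordOp A p.1.1)
      (wordOp A p.1.2 (Sc p.1.1 p.1.2 (lp.single 2 (S.act w₂ s) 1))) (S.act w₁ s)) x) :
    x = Sc w₁ w₂ (lp.single 2 (S.act w₂ s) 1) (S.act w₂ s) := by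
  have hother (p : IrredPair q) (hp : p ≠ ⟨(w₁, w₂), hirr⟩) : adjoint (wordOp A p.1.1)
      (wordOp A p.1.2 (Sc p.1.1 p.1.2 (lp.single 2 (S.act w₂ s) 1))) (S.act w₁ s) = 0 := by
    by_contra h
    obtain ⟨s', h₂, h₁⟩ :=
      exists_act_of_adjoint_wordOp_wordOp_single_ne_zero hA (hdiag _ _) (hnormal _ _) h
    obtain ⟨hw₁, hw₂, -⟩ := HomTree.eq_of_act_eq hirr p.2 h₁ h₂
    exact hp (Subtype.ext (Prod.ext hw₁ hw₂))
  rw [hx.unique (hasSum_single _ hother), adjoint_wordOp_wordOp_single_act hA (hdiag w₁ w₂)]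
  simp

end WordOperators

theorem causal_iff_lower_coefficients_vanish_general {q : ℕ}
    {T : Type} [DecidableEq T]
    (S : HomTree q T) (A : Fin q → (L2 T →L[ℂ] L2 T))
    (hA : ∀ (j : Fin q) (f : L2 T) (t : T), A j f t = f (S.shift j t))
    (X : L2 T →L[ℂ] L2 T)
    (Sc : List (Fin q) → List (Fin q) → (L2 T →L[ℂ] L2 T))
    (hdiag : ∀ w₁ w₂, IsDiagonal (Sc w₁ w₂))
    (hnormal : ∀ w₁ w₂ (r : T), (¬ ∃ s, S.act w₂ s = r) →
      Sc w₁ w₂ (lp.single 2 r 1) = 0)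
    (hrep : ∀ (f : L2 T) (t : T),
      HasSum (fun p : {p : List (Fin q) × List (Fin q) // Irred p.1 p.2} =>
        adjoint (wordOp A p.1.1) (wordOp A p.1.2 (Sc p.1.1 p.1.2 f)) t) (X f t)) :
    Causal S X ↔
      ∀ w₁ w₂, Irred w₁ w₂ → w₁.length < w₂.length → Sc w₁ w₂ = 0 := by
  rw [causal_iff_apply_single_eq_zero]
  constructor
  · intro hX w₁ w₂ hirr hlt
    refine eq_zero_of_apply_single_eq_zero fun r => ?_
    by_cases hr : ∃ s, S.act w₂ s = r
    · obtain ⟨s, rfl⟩ := hr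
      have hnple : ¬ S.ple (S.act w₂ s) (S.act w₁ s) := by
        rwa [HomTree.ple_act_iff hirr, not_le]
      rw [(hdiag w₁ w₂).apply_single, ← apply_single_act_eq_of_hasSum hA hdiag hnormal hirr s
        (hrep _ _), hX _ _ hnple, zero_smul]
    · exact hnormal w₁ w₂ r hr
  · intro hSc r t hrt
    have hzero (p : IrredPair q) :
        adjoint (wordOp A p.1.1) (wordOp A p.1.2 (Sc p.1.1 p.1.2 (lp.single 2 r 1))) t = 0 := by
      obtain ⟨⟨w₁, w₂⟩, hirr⟩ := p
      by_contra h
      obtain ⟨s, rfl, rfl⟩ :=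
        exists_act_of_adjoint_wordOp_wordOp_single_ne_zero hA (hdiag w₁ w₂) (hnormal w₁ w₂) h
      have hlt : w₁.length < w₂.length :=
        lt_of_not_ge fun hle => hrt ((S.ple_act_iff hirr s).2 hle)
      simp [hSc w₁ w₂ hirr hlt] at h
    exact (hrep _ t).unique (by simpa only [hzero] using hasSum_zero)

/-- Let `X ∈ B(ℓ²(T))` admit a pointwise absolutely convergent
representation `X = Σ′ w₁* w₂ S_{w₁,w₂}` over irreducible pairs of words, with
diagonal coefficients normalized so that `S_{w₁,w₂} χ_r = 0` for `r ∉ T·w₂`.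
Then `X` is causal if and only if `S_{w₁,w₂} = 0` whenever `|w₁| < |w₂|`. -/
theorem causal_iff_lower_coefficients_vanish {q : ℕ} (hq : 1 ≤ q)
    {T : Type} [DecidableEq T]
    (S : HomTree q T) (A : Fin q → (L2 T →L[ℂ] L2 T))
    (hA : ∀ (j : Fin q) (f : L2 T) (t : T), A j f t = f (S.shift j t))
    (X : L2 T →L[ℂ] L2 T)
    (Sc : List (Fin q) → List (Fin q) → (L2 T →L[ℂ] L2 T))
    (hdiag : ∀ w₁ w₂, IsDiagonal (Sc w₁ w₂))
    (hnormal : ∀ w₁ w₂ (r : T), (¬ ∃ s, S.act w₂ s = r) →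
      Sc w₁ w₂ (lp.single 2 r 1) = 0)
    (habs : ∀ (f : L2 T) (t : T),
      Summable fun p : {p : List (Fin q) × List (Fin q) // Irred p.1 p.2} =>
        ‖adjoint (wordOp A p.1.1) (wordOp A p.1.2 (Sc p.1.1 p.1.2 f)) t‖)
    (hrep : ∀ (f : L2 T) (t : T),
      HasSum (fun p : {p : List (Fin q) × List (Fin q) // Irred p.1 p.2} =>
        adjoint (wordOp A p.1.1) (wordOp A p.1.2 (Sc p.1.1 p.1.2 f)) t) (X f t)) :
    Causal S X ↔
      ∀ w₁ w₂, Irred w₁ w₂ → w₁.length < w₂.length → Sc w₁ w₂ = 0 :=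
  causal_iff_lower_coefficients_vanish_general S A hA X Sc hdiag hnormal hrep
end Multiscale
end
end

section
/- Let T ∈ B(ℓ²(T)) and let T_[∅] be the operator defined by (T_[∅]f)(t) = Σ over nodes r in the same horocycle as t of (Tχ_r)(t)·f(r) (i.e., the 'block-diagonal' part of T with respect to horocycles). Then T_[∅] is a bounded operator, ‖T_[∅]‖ ≤ ‖T‖, and T_[∅] is a constant. -/
open scoped InnerProductSpace ENNReal
open ContinuousLinearMap (adjoint)

noncomputable section

/-!
Writing `P_c` for the restriction of `ℓ²(T)` to a horocycle `c`, the horocycle-diagonal part is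
`X_[∅] = ∑_c P_c X P_c`. The `P_c` are orthogonal projections summing to the identity, so
`‖X_[∅] f‖² = ∑_c ‖P_c X P_c f‖² ≤ ‖X‖² ∑_c ‖P_c f‖² = ‖X‖² ‖f‖²`; the same computation works in
`ℓᵖ` for every finite `p`. The value `(X_[∅] f)(t)` only depends on `f` along the horocycle of
`t`, and every point of that horocycle lies below `s` whenever `t` does, which gives causality.
Finally `(X_[∅])* = (X*)_[∅]`, so the adjoint is causal as well.
-/

theorem ENNReal.toReal_pos_of_one_le {p : ℝ≥0∞} (h : 1 ≤ p) (hp : p ≠ ⊤) : 0 < p.toReal :=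
  ENNReal.toReal_pos (zero_lt_one.trans_le h).ne' hp

namespace lp

section Block

variable {ι κ 𝕜 E : Type*} [NontriviallyNormedField 𝕜] [NormedAddCommGroup E] [NormedSpace 𝕜 E]

theorem memℓp_of_tsum_enorm_rpow_ne_top {p : ℝ≥0∞} {f : ι → E}
    (hf : ∑' i, ‖f i‖ₑ ^ p.toReal ≠ ⊤) : Memℓp f p :=
  memℓp_gen <| by simpa only [← ENNReal.toReal_rpow, toReal_enorm] using ENNReal.summable_toReal hf

variable (𝕜) (p : ℝ≥0∞) [Fact (1 ≤ p)]

noncomputable def restrict (A : Set ι) : lp (fun _ : ι => E) p →L[𝕜] lp (fun _ : ι => E) p :=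
  lp.mapCLM p (fun i => A.indicator (fun _ => ContinuousLinearMap.id 𝕜 E) i) zero_le_one
    fun i => by
      by_cases hi : i ∈ A
      · simpa [hi] using ContinuousLinearMap.norm_id_le
      · simp [hi]

variable {𝕜 p}

theorem restrict_apply (A : Set ι) (f : lp (fun _ : ι => E) p) (i : ι) :
    restrict 𝕜 p A f i = A.indicator f i := by
  by_cases hi : i ∈ A <;> simp [restrict, hi]

theorem restrict_eq_zero {A : Set ι} {f : lp (fun _ : ι => E) p} (hf : ∀ i ∈ A, f i = 0) :
    restrict 𝕜 p A f = 0 := by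
  ext i
  rw [restrict_apply, lp.coeFn_zero, Pi.zero_apply, Set.indicator_apply_eq_zero]
  exact hf i

theorem tsum_enorm_rpow (hp : p ≠ ⊤) (f : lp (fun _ : ι => E) p) :
    ∑' i, ‖f i‖ₑ ^ p.toReal = ‖f‖ₑ ^ p.toReal := by
  have hp₀ : 0 < p.toReal := ENNReal.toReal_pos_of_one_le Fact.out hp
  simp_rw [← ofReal_norm, ENNReal.ofReal_rpow_of_nonneg (norm_nonneg _) hp₀.le,
    ← ENNReal.ofReal_tsum_of_nonneg (fun _ => by positivity) ((lp.memℓp f).summable hp₀),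
    lp.norm_rpow_eq_tsum hp₀]

theorem tsum_enorm_rpow_restrict_fiber (hp : p ≠ ⊤) (c : ι → κ) (f : lp (fun _ : ι => E) p) :
    ∑' k, ‖restrict 𝕜 p (c ⁻¹' {k}) f‖ₑ ^ p.toReal = ‖f‖ₑ ^ p.toReal := by
  have hp₀ : 0 < p.toReal := ENNReal.toReal_pos_of_one_le Fact.out hp
  rw [← tsum_enorm_rpow hp, ← ENNReal.tsum_fiberwise _ c]
  refine tsum_congr fun k => ?_
  rw [← tsum_enorm_rpow hp, tsum_subtype (c ⁻¹' {k}) fun i => ‖f i‖ₑ ^ p.toReal]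
  refine tsum_congr fun i => ?_
  by_cases hi : i ∈ c ⁻¹' {k}
  · simp only [restrict_apply, Set.indicator_of_mem hi]
  · simp [restrict_apply, hi, hp₀]

variable (s : Setoid ι) (X : lp (fun _ : ι => E) p →L[𝕜] lp (fun _ : ι => E) p)

theorem setOf_rel_eq_preimage (i : ι) : {j | s j i} = Quotient.mk s ⁻¹' {Quotient.mk s i} := by
  ext j
  exact Quotient.eq.symm

theorem tsum_enorm_rpow_blockDiag_le (hp : p ≠ ⊤) (f : lp (fun _ : ι => E) p) :
    ∑' i, ‖X (restrict 𝕜 p {j | s j i} f) i‖ₑ ^ p.toReal ≤ ‖X‖ₑ ^ p.toReal * ‖f‖ₑ ^ p.toReal := by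
  have hp₀ : 0 < p.toReal := ENNReal.toReal_pos_of_one_le Fact.out hp
  set P : Quotient s → lp (fun _ : ι => E) p := fun k => restrict 𝕜 p (Quotient.mk s ⁻¹' {k}) f
  calc ∑' i, ‖X (restrict 𝕜 p {j | s j i} f) i‖ₑ ^ p.toReal
      = ∑' k, ∑' i : Quotient.mk s ⁻¹' {k}, ‖X (P k) i‖ₑ ^ p.toReal := by
        rw [← ENNReal.tsum_fiberwise _ (Quotient.mk s)]
        refine tsum_congr fun k => tsum_congr fun ⟨i, hi⟩ => ?_
        rw [setOf_rel_eq_preimage, Set.mem_preimage.1 hi]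
    _ ≤ ∑' k, ‖X (P k)‖ₑ ^ p.toReal := by
        refine ENNReal.tsum_le_tsum fun k => ?_
        rw [← tsum_enorm_rpow hp]
        exact ENNReal.tsum_comp_le_tsum_of_injective Subtype.val_injective _
    _ ≤ ∑' k, ‖X‖ₑ ^ p.toReal * ‖P k‖ₑ ^ p.toReal := by
        refine ENNReal.tsum_le_tsum fun k => ?_
        rw [← ENNReal.mul_rpow_of_nonneg _ _ hp₀.le]
        exact ENNReal.rpow_le_rpow (X.le_opENorm _) hp₀.le
    _ = ‖X‖ₑ ^ p.toReal * ‖f‖ₑ ^ p.toReal := by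
        rw [ENNReal.tsum_mul_left, tsum_enorm_rpow_restrict_fiber hp]

theorem norm_le_of_apply_eq_blockDiag (hp : p ≠ ⊤) {f g : lp (fun _ : ι => E) p}
    (hg : ∀ i, g i = X (restrict 𝕜 p {j | s j i} f) i) : ‖g‖ ≤ ‖X‖ * ‖f‖ := by
  have hp₀ : 0 < p.toReal := ENNReal.toReal_pos_of_one_le Fact.out hp
  have h : ‖g‖ₑ ≤ ‖X‖ₑ * ‖f‖ₑ := by
    rw [← ENNReal.rpow_le_rpow_iff hp₀, ENNReal.mul_rpow_of_nonneg _ _ hp₀.le,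
      ← tsum_enorm_rpow hp]
    simpa only [hg] using tsum_enorm_rpow_blockDiag_le s X hp f
  rw [← ofReal_norm, ← ofReal_norm, ← ofReal_norm, ← ENNReal.ofReal_mul (norm_nonneg _),
    ENNReal.ofReal_le_ofReal_iff (by positivity)] at h
  exact h

noncomputable def blockDiag (hp : p ≠ ⊤) : lp (fun _ : ι => E) p →L[𝕜] lp (fun _ : ι => E) p :=
  LinearMap.mkContinuous
    { toFun f := ⟨fun i => X (restrict 𝕜 p {j | s j i} f) i,
        memℓp_of_tsum_enorm_rpow_ne_top <| ne_top_of_le_ne_top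
          (ENNReal.mul_ne_top (ENNReal.rpow_ne_top_of_nonneg ENNReal.toReal_nonneg enorm_ne_top)
            (ENNReal.rpow_ne_top_of_nonneg ENNReal.toReal_nonneg enorm_ne_top))
          (tsum_enorm_rpow_blockDiag_le s X hp f)⟩
      map_add' f g := by ext i; simp only [map_add]; rfl
      map_smul' c f := by ext i; simp only [map_smul]; rfl }
    ‖X‖ fun f => norm_le_of_apply_eq_blockDiag s X hp fun _ => rfl

variable (hp : p ≠ ⊤)

theorem blockDiag_apply (f : lp (fun _ : ι => E) p) (i : ι) :
    blockDiag s X hp f i = X (restrict 𝕜 p {j | s j i} f) i := rfl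

theorem norm_blockDiag_le : ‖blockDiag s X hp‖ ≤ ‖X‖ :=
  LinearMap.mkContinuous_norm_le _ (norm_nonneg X) _

theorem blockDiag_apply_eq_zero {f : lp (fun _ : ι => E) p} {i : ι} (hf : ∀ j, s j i → f j = 0) :
    blockDiag s X hp f i = 0 := by
  rw [blockDiag_apply, restrict_eq_zero (A := {j | s j i}) hf, map_zero, lp.coeFn_zero,
    Pi.zero_apply]

variable [DecidableEq ι]

theorem hasSum_blockDiag_apply (f : lp (fun _ : ι => E) p) (i : ι) :
    HasSum (fun j : {j // s j i} => X (lp.single p j.1 (f j.1)) i) (blockDiag s X hp f i) := by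
  have hsupp : Function.support (fun j => lp.single p j (restrict 𝕜 p {j | s j i} f j))
      ⊆ {j | s j i} := fun j hj => by
    by_contra hji
    simp [restrict_apply, hji] at hj
  have h := ((hasSum_subtype_iff_of_support_subset hsupp).2 (lp.hasSum_single hp _)).mapL
    ((lp.evalCLM 𝕜 (fun _ => E) p i).comp X)
  refine h.congr_fun fun ⟨j, hj⟩ => ?_
  simp only [Function.comp_apply, restrict_apply, Set.indicator_of_mem hj,
    ContinuousLinearMap.comp_apply]
  rfl

theorem blockDiag_single_apply_of_rel {j i : ι} (hji : s j i) (a : E) :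
    blockDiag s X hp (lp.single p j a) i = X (lp.single p j a) i := by
  have h : restrict 𝕜 p {k | s k i} (lp.single p j a) = lp.single p j a := by
    ext k
    by_cases hk : k = j
    · subst hk; simp [restrict_apply, hji]
    · simp [restrict_apply, hk]
  rw [blockDiag_apply, h]

theorem blockDiag_single_apply_of_not_rel {j i : ι} (hji : ¬s j i) (a : E) :
    blockDiag s X hp (lp.single p j a) i = 0 :=
  blockDiag_apply_eq_zero s X hp fun _ hki =>
    lp.single_apply_ne (E := fun _ => E) p j a fun hkj => hji (hkj ▸ hki)

end Block

section Scalar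

open ComplexConjugate

variable {ι 𝕜 : Type*} [DecidableEq ι] (s : Setoid ι)

theorem hasSum_blockDiag_apply_mul [NontriviallyNormedField 𝕜] {p : ℝ≥0∞} [Fact (1 ≤ p)]
    (X : lp (fun _ : ι => 𝕜) p →L[𝕜] lp (fun _ : ι => 𝕜) p) (hp : p ≠ ⊤)
    (f : lp (fun _ : ι => 𝕜) p) (i : ι) :
    HasSum (fun j : {j // s j i} => X (lp.single p j.1 1) i * f j.1) (blockDiag s X hp f i) := by
  refine (hasSum_blockDiag_apply s X hp f i).congr_fun fun j => ?_
  have hsingle : lp.single (E := fun _ => 𝕜) p j.1 (f j.1) = f j.1 • lp.single p j.1 1 := by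
    rw [← lp.single_smul, smul_eq_mul, mul_one]
  simp only [hsingle, map_smul, lp.coeFn_smul, Pi.smul_apply, smul_eq_mul, mul_comm]

variable [RCLike 𝕜]

theorem adjoint_single_apply (Z : lp (fun _ : ι => 𝕜) 2 →L[𝕜] lp (fun _ : ι => 𝕜) 2) (i j : ι)
    (a : 𝕜) : adjoint Z (lp.single 2 i a) j = conj (Z (lp.single 2 j 1) i) * a := by
  calc adjoint Z (lp.single 2 i a) j
      = ⟪lp.single 2 j (1 : 𝕜), adjoint Z (lp.single 2 i a)⟫_𝕜 := by
        rw [lp.inner_single_left, RCLike.inner_apply', map_one, one_mul]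
    _ = conj (Z (lp.single 2 j 1) i) * a := by
        rw [ContinuousLinearMap.adjoint_inner_right, lp.inner_single_right, RCLike.inner_apply']

theorem adjoint_blockDiag (X : lp (fun _ : ι => 𝕜) 2 →L[𝕜] lp (fun _ : ι => 𝕜) 2) :
    adjoint (blockDiag s X ENNReal.ofNat_ne_top) =
      blockDiag s (adjoint X) ENNReal.ofNat_ne_top := by
  refine lp.ext_continuousLinearMap ENNReal.ofNat_ne_top fun i => ?_
  refine ContinuousLinearMap.ext fun a => lp.ext (funext fun j => ?_)
  simp only [ContinuousLinearMap.comp_apply, lp.singleContinuousLinearMap_apply,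
    adjoint_single_apply]
  by_cases hji : s j i
  · rw [blockDiag_single_apply_of_rel s X _ hji, blockDiag_single_apply_of_rel s _ _ (s.symm hji),
      adjoint_single_apply]
  · rw [blockDiag_single_apply_of_not_rel s X _ hji,
      blockDiag_single_apply_of_not_rel s _ _ fun hij => hji (s.symm hij), map_zero, zero_mul]

end Scalar

end lp

namespace Multiscale

namespace HomTree

variable {q : ℕ} {T : Type} (S : HomTree q T)

theorem iterate_parent_eq_of_le {s t : T} {m n : ℕ} (h : S.parent^[m] s = S.parent^[m] t)
    (hmn : m ≤ n) : S.parent^[n] s = S.parent^[n] t := by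
  obtain ⟨k, rfl⟩ := Nat.exists_eq_add_of_le hmn
  rw [add_comm, Function.iterate_add_apply, Function.iterate_add_apply, h]

theorem horo_equivalence : Equivalence S.horo where
  refl _ := ⟨0, rfl⟩
  symm := fun ⟨n, h⟩ => ⟨n, h.symm⟩
  trans := fun ⟨m, hm⟩ ⟨n, hn⟩ =>
    ⟨max m n, (S.iterate_parent_eq_of_le hm (le_max_left m n)).trans
      (S.iterate_parent_eq_of_le hn (le_max_right m n))⟩

def horoSetoid : Setoid T := ⟨S.horo, S.horo_equivalence⟩

variable {S}

theorem ple_of_horo_of_ple {r t s : T} (hrt : S.horo r t) (hts : S.ple t s) : S.ple r s := by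
  obtain ⟨k, hk⟩ := hrt
  obtain ⟨m, n, hmn, h⟩ := hts
  refine ⟨m + k, n + k, by omega, ?_⟩
  rw [S.iterate_parent_eq_of_le hk (Nat.le_add_left k m), add_comm m, Function.iterate_add_apply,
    h, ← Function.iterate_add_apply, add_comm]

end HomTree

theorem causal_blockDiag_horoSetoid {q : ℕ} {T : Type} [DecidableEq T] (S : HomTree q T)
    (Z : L2 T →L[ℂ] L2 T) : Causal S (lp.blockDiag S.horoSetoid Z ENNReal.ofNat_ne_top) :=
  fun _ _ hf _ hts => lp.blockDiag_apply_eq_zero _ _ _ fun r hrt =>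
    hf r (HomTree.ple_of_horo_of_ple hrt hts)

theorem horocycle_diagonal_part_general {q : ℕ} {T : Type} [DecidableEq T]
    (S : HomTree q T) (X : L2 T →L[ℂ] L2 T) :
    ∃ Y : L2 T →L[ℂ] L2 T,
      (∀ (f : L2 T) (t : T),
        HasSum (fun r : {r : T // S.horo r t} =>
          X (lp.single 2 r.1 1) t * f r.1) (Y f t)) ∧
      ‖Y‖ ≤ ‖X‖ ∧ IsConst S Y := by
  refine ⟨lp.blockDiag S.horoSetoid X ENNReal.ofNat_ne_top,
    lp.hasSum_blockDiag_apply_mul _ X _, lp.norm_blockDiag_le _ X _,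
    causal_blockDiag_horoSetoid S X, ?_⟩
  rw [lp.adjoint_blockDiag]
  exact causal_blockDiag_horoSetoid S (adjoint X)

/-- For a bounded operator `X` on `ℓ²(T)`, its horocycle-diagonal
part `X_[∅]`, defined by `(X_[∅] f)(t) = Σ_{r ≍ t} (Xχ_r)(t)·f(r)`, is a
bounded operator, satisfies `‖X_[∅]‖ ≤ ‖X‖`, and is a constant. -/
theorem horocycle_diagonal_part {q : ℕ} (hq : 1 ≤ q) {T : Type} [DecidableEq T]
    (S : HomTree q T) (X : L2 T →L[ℂ] L2 T) :
    ∃ Y : L2 T →L[ℂ] L2 T,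
      (∀ (f : L2 T) (t : T),
        HasSum (fun r : {r : T // S.horo r t} =>
          X (lp.single 2 r.1 1) t * f r.1) (Y f t)) ∧
      ‖Y‖ ≤ ‖X‖ ∧ IsConst S Y :=
  horocycle_diagonal_part_general S X

end Multiscale
end
end

section
/- For c ∈ B(T), the operator R_c := Σ_{n≥0} (cα)^n(α*c*)^n is a constant satisfying R_c = I + c(αR_cα*)c*; in particular R_c ≥ I (and R_c > 0). -/
open scoped InnerProductSpace ENNReal
open ContinuousLinearMap (adjoint)

noncomputable section

/-! By Gelfand's formula `‖(cα)ⁿ‖ ≤ rⁿ` eventually for some `r < 1`, so the series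
converges absolutely; its terms `(cα)ⁿ((cα)ⁿ)*` are positive and the `n = 0` term is `I`,
whence `R_c ≥ I`, and shifting the index gives `R_c = I + (cα) R_c (cα)*`. The constants
form a norm-closed *-subalgebra, and `K ↦ αᵢ K αⱼ*` preserves causality because `αⱼ*` only
moves values from a node's parent, so each term, and hence `R_c`, is a constant. -/

open Filter Topology
open scoped NNReal

theorem eventually_norm_pow_le_of_spectralRadius_lt {A : Type*} [NormedRing A]
    [NormedAlgebra ℂ A] [CompleteSpace A] {a : A} {r : ℝ≥0} (h : spectralRadius ℂ a < r) :
    ∀ᶠ n : ℕ in atTop, ‖a ^ n‖ ≤ r ^ n := by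
  have hgelfand := spectrum.pow_nnnorm_pow_one_div_tendsto_nhds_spectralRadius a
  filter_upwards [hgelfand.eventually_lt_const h, eventually_gt_atTop 0] with n hn hn0
  rw [one_div, ← ENNReal.coe_rpow_of_nonneg _ (by positivity), ENNReal.coe_lt_coe] at hn
  have := (NNReal.rpow_inv_le_iff (Nat.cast_pos.2 hn0)).1 hn.le
  rw [NNReal.rpow_natCast] at this
  exact_mod_cast this

theorem summable_norm_pow_mul_star_pow {A : Type*} [NormedRing A] [StarRing A]
    [NormedStarGroup A] [NormedAlgebra ℂ A] [CompleteSpace A] {a : A}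
    (h : spectralRadius ℂ a < 1) : Summable fun n : ℕ => ‖a ^ n * star a ^ n‖ := by
  obtain ⟨r, hr, hr1⟩ := ENNReal.lt_iff_exists_nnreal_btwn.1 h
  have hr1 : r < 1 := by exact_mod_cast hr1
  refine Summable.of_norm_bounded_eventually_nat (summable_geometric_of_lt_one (by positivity)
    (pow_lt_one₀ r.2 hr1 two_ne_zero)) ?_
  filter_upwards [eventually_norm_pow_le_of_spectralRadius_lt hr] with n hn
  calc ‖‖a ^ n * star a ^ n‖‖ = ‖a ^ n * star (a ^ n)‖ := by rw [norm_norm, star_pow]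
    _ ≤ ‖a ^ n‖ * ‖star (a ^ n)‖ := norm_mul_le _ _
    _ = ‖a ^ n‖ * ‖a ^ n‖ := by rw [norm_star]
    _ ≤ (r : ℝ) ^ n * r ^ n := mul_le_mul hn hn (norm_nonneg _) (by positivity)
    _ = ((r : ℝ) ^ 2) ^ n := by ring

theorem eq_one_add_mul_mul_of_hasSum_pow_mul_pow {α : Type*} [Ring α] [TopologicalSpace α]
    [IsTopologicalRing α] [T2Space α] {a b R : α} (h : HasSum (fun n : ℕ => a ^ n * b ^ n) R) :
    R = 1 + a * R * b := by
  have htail := (hasSum_nat_add_iff' 1).2 h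
  have hshift : HasSum (fun n : ℕ => a ^ (n + 1) * b ^ (n + 1)) (a * R * b) := by
    have hterm (n : ℕ) : a * (a ^ n * b ^ n) * b = a ^ (n + 1) * b ^ (n + 1) := by
      rw [pow_succ', pow_succ]; simp only [mul_assoc]
    simpa only [hterm] using (h.mul_left a).mul_right b
  rw [Finset.sum_range_one, pow_zero, pow_zero, mul_one] at htail
  rw [← htail.unique hshift, add_sub_cancel]

theorem one_le_of_hasSum_pow_mul_star_pow {α : Type*} [Ring α] [PartialOrder α] [StarRing α]
    [StarOrderedRing α] [TopologicalSpace α] [OrderClosedTopology α] {a R : α}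
    (h : HasSum (fun n : ℕ => a ^ n * star a ^ n) R) : 1 ≤ R := by
  simpa using le_hasSum h 0 fun n _ => by rw [← star_pow]; exact mul_star_self_nonneg _

namespace Multiscale

variable {q : ℕ} {T : Type}

namespace HomTree

variable {S : HomTree q T}

theorem ple_parent_of_ple_shift {u s : T} {i : Fin q} (h : S.ple u (S.shift i s)) :
    S.ple (S.parent u) s := by
  obtain ⟨m, n, hmn, h⟩ := h
  refine ⟨m, n, hmn, ?_⟩
  rw [← Function.iterate_succ_apply S.parent m u, Function.iterate_succ_apply', h,
    ← Function.iterate_succ_apply' S.parent n, Function.iterate_succ_apply, S.parent_shift]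

theorem ple_shift_shift {t s : T} (i : Fin q) (h : S.ple t s) :
    S.ple (S.shift i t) (S.shift i s) := by
  obtain ⟨m, n, hmn, h⟩ := h
  refine ⟨m + 1, n + 1, Nat.succ_le_succ hmn, ?_⟩
  rwa [Function.iterate_succ_apply, Function.iterate_succ_apply, S.parent_shift, S.parent_shift]

end HomTree

def causalSubalgebra (S : HomTree q T) : Subalgebra ℂ (L2 T →L[ℂ] L2 T) where
  carrier := {X | Causal S X}
  mul_mem' hX hY s f hf t ht := hX s _ (hY s f hf) t ht
  add_mem' hX hY s f hf t ht := by simp [hX s f hf t ht, hY s f hf t ht]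
  algebraMap_mem' z s f hf t ht := by simp [Algebra.algebraMap_eq_smul_one, hf t ht]

theorem isClosed_causalSubalgebra (S : HomTree q T) :
    IsClosed (causalSubalgebra S : Set (L2 T →L[ℂ] L2 T)) := by
  have hset : (causalSubalgebra S : Set (L2 T →L[ℂ] L2 T)) =
      ⋂ (s : T) (f : L2 T) (_ : ∀ t, S.ple t s → f t = 0) (t : T) (_ : S.ple t s),
        {X | lp.evalCLM ℂ (fun _ : T => ℂ) 2 t (X f) = 0} := by
    ext X; simp [causalSubalgebra, Causal, lp.evalCLM]
  rw [hset]
  refine isClosed_iInter fun s => isClosed_iInter fun f => isClosed_iInter fun _ =>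
    isClosed_iInter fun t => isClosed_iInter fun _ => isClosed_eq ?_ continuous_const
  fun_prop

theorem isConst_iff {S : HomTree q T} {X : L2 T →L[ℂ] L2 T} :
    IsConst S X ↔ X ∈ causalSubalgebra S ∧ star X ∈ causalSubalgebra S := by
  rw [ContinuousLinearMap.star_eq_adjoint]; rfl

def constants (S : HomTree q T) : StarSubalgebra ℂ (L2 T →L[ℂ] L2 T) where
  carrier := {X | IsConst S X}
  mul_mem' {X Y} hX hY := by
    rw [Set.mem_ofPred_eq, isConst_iff, star_mul] at *
    exact ⟨mul_mem hX.1 hY.1, mul_mem hY.2 hX.2⟩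
  add_mem' {X Y} hX hY := by
    rw [Set.mem_ofPred_eq, isConst_iff, star_add] at *
    exact ⟨add_mem hX.1 hY.1, add_mem hX.2 hY.2⟩
  algebraMap_mem' z := by
    rw [Set.mem_ofPred_eq, isConst_iff, ← algebraMap_star_comm]
    exact ⟨Subalgebra.algebraMap_mem _ z, Subalgebra.algebraMap_mem _ _⟩
  star_mem' {X} hX := by
    rw [Set.mem_ofPred_eq, isConst_iff, star_star] at *
    exact hX.symm

theorem mem_constants {S : HomTree q T} {X : L2 T →L[ℂ] L2 T} :
    X ∈ constants S ↔ IsConst S X :=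
  Iff.rfl

theorem isClosed_constants (S : HomTree q T) :
    IsClosed (constants S : Set (L2 T →L[ℂ] L2 T)) := by
  have hclosed := isClosed_causalSubalgebra S
  have hset : (constants S : Set (L2 T →L[ℂ] L2 T)) =
      (causalSubalgebra S : Set (L2 T →L[ℂ] L2 T)) ∩ star ⁻¹' ↑(causalSubalgebra S) := by
    ext X; exact isConst_iff
  rw [hset]
  exact hclosed.inter (hclosed.preimage continuous_star)

section Shifts

variable {S : HomTree q T} {A : Fin q → (L2 T →L[ℂ] L2 T)}
  (hA : ∀ (j : Fin q) (f : L2 T) (t : T), A j f t = f (S.shift j t))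

include hA

theorem adjoint_shift_apply [DecidableEq T] (j : Fin q) (f : L2 T) (u : T) :
    adjoint (A j) f u = if S.shift j (S.parent u) = u then f (S.parent u) else 0 := by
  have hsingle : A j (lp.single 2 u 1) =
      if S.shift j (S.parent u) = u then lp.single 2 (S.parent u) 1 else 0 := by
    ext t
    rw [hA]
    split_ifs with h
    · have hiff : S.shift j t = u ↔ t = S.parent u :=
        ⟨fun ht => by rw [← ht, S.parent_shift], fun ht => ht ▸ h⟩
      simp only [lp.single_apply, Pi.single_apply, hiff]
    · have hne : S.shift j t ≠ u := fun ht => h (by rw [← ht, S.parent_shift])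
      simp [lp.single_apply, hne]
  have hcoord (g : L2 T) : g u = ⟪lp.single 2 u (1 : ℂ), g⟫_ℂ := by
    simp [lp.inner_single_left]
  rw [hcoord, ContinuousLinearMap.adjoint_inner_right, hsingle]
  split_ifs
  · simp [lp.inner_single_left]
  · simp

theorem shift_mul_mul_star_shift_mem_causalSubalgebra (i j : Fin q) {K : L2 T →L[ℂ] L2 T}
    (hK : K ∈ causalSubalgebra S) : A i * K * star (A j) ∈ causalSubalgebra S := by
  classical
  intro s f hf t ht
  have hvanish : ∀ u, S.ple u (S.shift i s) → star (A j) f u = 0 := by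
    intro u hu
    rw [ContinuousLinearMap.star_eq_adjoint, adjoint_shift_apply hA]
    split_ifs
    · exact hf _ (HomTree.ple_parent_of_ple_shift hu)
    · rfl
  change A i (K (star (A j) f)) t = 0
  rw [hA]
  exact hK _ _ hvanish _ (HomTree.ple_shift_shift i ht)

theorem shift_mul_mul_star_shift_mem_constants (i j : Fin q) {K : L2 T →L[ℂ] L2 T}
    (hK : K ∈ constants S) : A i * K * star (A j) ∈ constants S := by
  rw [mem_constants, isConst_iff] at *
  refine ⟨shift_mul_mul_star_shift_mem_causalSubalgebra hA i j hK.1, ?_⟩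
  rw [star_mul, star_mul, star_star, ← mul_assoc]
  exact shift_mul_mul_star_shift_mem_causalSubalgebra hA j i hK.2

theorem conj_mem_constants {c : Fin q → (L2 T →L[ℂ] L2 T)} (hc : ∀ j, c j ∈ constants S)
    {K : L2 T →L[ℂ] L2 T} (hK : K ∈ constants S) :
    (∑ j, c j * A j) * K * star (∑ j, c j * A j) ∈ constants S := by
  have hexpand : (∑ j, c j * A j) * K * star (∑ j, c j * A j) =
      ∑ j, ∑ i, c i * (A i * K * star (A j)) * star (c j) := by
    simp only [star_sum, star_mul, Finset.sum_mul, Finset.mul_sum, mul_assoc]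
  rw [hexpand]
  exact sum_mem fun j _ => sum_mem fun i _ => mul_mem (mul_mem (hc i)
    (shift_mul_mul_star_shift_mem_constants hA i j hK)) (star_mem (hc j))

theorem pow_mul_star_pow_mem_constants {c : Fin q → (L2 T →L[ℂ] L2 T)}
    (hc : ∀ j, c j ∈ constants S) (n : ℕ) :
    (∑ j, c j * A j) ^ n * star (∑ j, c j * A j) ^ n ∈ constants S := by
  induction n with
  | zero => simp only [pow_zero, mul_one]; exact one_mem (constants S)
  | succ n ih =>
    rw [pow_succ', pow_succ, mul_assoc, ← mul_assoc _ _ (star _), ← mul_assoc]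
    exact conj_mem_constants hA hc ih

end Shifts

theorem Rc_properties_general {q : ℕ} {T : Type}
    (S : HomTree q T) (A : Fin q → (L2 T →L[ℂ] L2 T))
    (hA : ∀ (j : Fin q) (f : L2 T) (t : T), A j f t = f (S.shift j t))
    (c : Fin q → (L2 T →L[ℂ] L2 T)) (hc : ∀ j, IsConst S (c j))
    (hrad : spectralRadius ℂ (∑ j, c j ∘L A j) < 1) :
    ∃ R : L2 T →L[ℂ] L2 T,
      Summable (fun n : ℕ =>
        ‖((∑ j, c j ∘L A j) ^ n) ∘L ((adjoint (∑ j, c j ∘L A j)) ^ n)‖) ∧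
      HasSum (fun n : ℕ =>
        ((∑ j, c j ∘L A j) ^ n) ∘L ((adjoint (∑ j, c j ∘L A j)) ^ n)) R ∧
      IsConst S R ∧
      R = 1 + (∑ j, c j ∘L A j) ∘L R ∘L adjoint (∑ j, c j ∘L A j) ∧
      (R - 1).IsPositive ∧ R.IsPositive := by
  simp only [← ContinuousLinearMap.star_eq_adjoint, ← ContinuousLinearMap.mul_def,
    ← ContinuousLinearMap.nonneg_iff_isPositive, ← mem_constants] at hrad hc ⊢
  have hsum := summable_norm_pow_mul_star_pow hrad
  have hR := hsum.of_norm.hasSum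
  have hone_le := one_le_of_hasSum_pow_mul_star_pow hR
  refine ⟨_, hsum, hR, ?_, ?_, sub_nonneg.2 hone_le, zero_le_one.trans hone_le⟩
  · exact (isClosed_constants S).mem_of_tendsto hR
      (Eventually.of_forall fun _ => sum_mem fun n _ => pow_mul_star_pow_mem_constants hA hc n)
  · rw [← mul_assoc]
    exact eq_one_add_mul_mul_of_hasSum_pow_mul_pow hR

/-- For `c ∈ B(T)`, the operator
`R_c = Σ_{n≥0} (cα)ⁿ(α*c*)ⁿ` (norm-absolutely convergent) is a constant
satisfying `R_c = I + c(αR_cα*)c*`; in particular `R_c ≥ I` and `R_c > 0`.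
Here `cα = Σⱼ cⱼαⱼ`, `α*c* = (cα)*`, and `c(αR_cα*)c* = (cα) R_c (cα)*`. -/
theorem Rc_properties {q : ℕ} (hq : 1 ≤ q) {T : Type} [DecidableEq T]
    (S : HomTree q T) (A : Fin q → (L2 T →L[ℂ] L2 T))
    (hA : ∀ (j : Fin q) (f : L2 T) (t : T), A j f t = f (S.shift j t))
    (c : Fin q → (L2 T →L[ℂ] L2 T)) (hc : ∀ j, IsConst S (c j))
    (hrad : spectralRadius ℂ (∑ j, c j ∘L A j) < 1) :
    ∃ R : L2 T →L[ℂ] L2 T,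
      Summable (fun n : ℕ =>
        ‖((∑ j, c j ∘L A j) ^ n) ∘L ((adjoint (∑ j, c j ∘L A j)) ^ n)‖) ∧
      HasSum (fun n : ℕ =>
        ((∑ j, c j ∘L A j) ^ n) ∘L ((adjoint (∑ j, c j ∘L A j)) ^ n)) R ∧
      IsConst S R ∧
      R = 1 + (∑ j, c j ∘L A j) ∘L R ∘L adjoint (∑ j, c j ∘L A j) ∧
      (R - 1).IsPositive ∧ R.IsPositive :=
  Rc_properties_general S A hA c hc hrad
end Multiscale
end
end

section
/- Let c ∈ B(T), R_c = Σ_{n≥0}(cα)^n(α*c*)^n, and L_c := α(R_c − R_c α* c* R_c^{-1} c α R_c)α*. Then L_c > 0, L_c^{-1} = c*c + α R_c^{-1} α* = I + c*c − αcL_c c*α*, and cL_c = R_c^{-1} c α R_c α*. -/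
open scoped InnerProductSpace ENNReal
open ContinuousLinearMap (adjoint)

noncomputable section

namespace Multiscale

variable {q : ℕ} {T : Type} [DecidableEq T]

/-- `ℓ²(T)^q` with the Hilbert space structure. -/
abbrev L2q (q : ℕ) (T : Type) : Type := PiLp 2 (fun _ : Fin q => L2 T)

instance {q : ℕ} {T : Type} : CompleteSpace (L2q q T) :=
  inferInstance

/-!
With `X = cr ∘ Al` (the operator `cα`) and `M = R - R X* R⁻¹ X R`, one has `L_c = α M α*` and
`c*c + α R⁻¹ α* = α (X* X + R⁻¹) α*`, because `α` is unitary. The identity `R = 1 + X R X*` says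
that `M` is the Woodbury expression `R - R X* (1 + X R X*)⁻¹ X R` for `(R⁻¹ + X* X)⁻¹`, so all the
identities are computations in the ring of bounded operators on `ℓ²(T)`. Positivity follows since
`R ≥ I` makes `R⁻¹`, hence `c*c + α R⁻¹ α*`, positive, and a one-sided inverse of a positive
operator is positive.
-/

open ContinuousLinearMap

section Woodbury

variable {A : Type*} [Ring A] {R Rinv X Y : A}

theorem mul_woodbury_eq (hR : R = 1 + X * R * Y) (h₁ : R * Rinv = 1) :
    X * (R - R * Y * Rinv * X * R) = Rinv * X * R := by
  have hXRY : X * R * Y = R - 1 := eq_sub_of_add_eq' hR.symm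
  calc X * (R - R * Y * Rinv * X * R) = X * R - X * R * Y * Rinv * X * R := by noncomm_ring
    _ = X * R - (R - 1) * Rinv * X * R := by rw [hXRY]
    _ = Rinv * X * R + X * R - R * Rinv * X * R := by noncomm_ring
    _ = Rinv * X * R := by rw [h₁]; noncomm_ring

theorem mul_woodbury_mul_eq (hR : R = 1 + X * R * Y) (h₁ : R * Rinv = 1) (h₂ : Rinv * R = 1) :
    X * (R - R * Y * Rinv * X * R) * Y = 1 - Rinv := by
  have hXRY : X * R * Y = R - 1 := eq_sub_of_add_eq' hR.symm
  calc X * (R - R * Y * Rinv * X * R) * Y = Rinv * (X * R * Y) := by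
        rw [mul_woodbury_eq hR h₁]; noncomm_ring
    _ = 1 - Rinv := by rw [hXRY, mul_sub, h₂, mul_one]

theorem woodbury_mul_eq_one (hR : R = 1 + X * R * Y) (h₁ : R * Rinv = 1) (h₂ : Rinv * R = 1) :
    (R - R * Y * Rinv * X * R) * (Y * X + Rinv) = 1 := by
  have hXRY : X * R * Y = R - 1 := eq_sub_of_add_eq' hR.symm
  calc (R - R * Y * Rinv * X * R) * (Y * X + Rinv)
      = R * Y * X + R * Rinv - R * Y * Rinv * (X * R * Y) * X
          - R * Y * Rinv * X * (R * Rinv) := by noncomm_ring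
    _ = R * Y * X + R * Rinv - R * Y * (Rinv * R) * X := by
        rw [hXRY, h₁]; noncomm_ring
    _ = 1 := by rw [h₁, h₂]; noncomm_ring

theorem add_mul_woodbury_eq_one (hR : R = 1 + X * R * Y) (h₁ : R * Rinv = 1)
    (h₂ : Rinv * R = 1) : (Y * X + Rinv) * (R - R * Y * Rinv * X * R) = 1 := by
  have hXRY : X * R * Y = R - 1 := eq_sub_of_add_eq' hR.symm
  calc (Y * X + Rinv) * (R - R * Y * Rinv * X * R)
      = Y * X * R + Rinv * R - Y * (X * R * Y) * Rinv * X * R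
          - (Rinv * R) * Y * Rinv * X * R := by noncomm_ring
    _ = Y * X * R + Rinv * R - Y * (R * Rinv) * X * R := by
        rw [hXRY, h₂]; noncomm_ring
    _ = 1 := by rw [h₁, h₂]; noncomm_ring

end Woodbury

section Conj

variable {S E F : Type*} [Semiring S] [TopologicalSpace E] [AddCommMonoid E] [Module S E]
  [TopologicalSpace F] [AddCommMonoid F] [Module S F] {U : E →L[S] F} {V : F →L[S] E}

theorem conj_comp_conj (h : V ∘L U = 1) (M N : E →L[S] E) :
    (U ∘L M ∘L V) ∘L (U ∘L N ∘L V) = U ∘L (M * N) ∘L V := by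
  rw [mul_def, comp_assoc, comp_assoc, ← comp_assoc V, h, one_def, id_comp]
  simp only [comp_assoc]

theorem conj_one (h : U ∘L V = 1) : U ∘L (1 : E →L[S] E) ∘L V = 1 := by
  rw [one_def, id_comp, h]

end Conj

theorem _root_.ContinuousLinearMap.IsPositive.of_comp_eq_one {𝕜 E : Type*} [RCLike 𝕜]
    [NormedAddCommGroup E] [InnerProductSpace 𝕜 E] [CompleteSpace E] {T S : E →L[𝕜] E}
    (hT : T.IsPositive) (h : T ∘L S = 1) : S.IsPositive := by
  have hST : adjoint S ∘L T = 1 := by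
    rw [← hT.isSelfAdjoint.adjoint_eq, ← adjoint_comp, h, ← star_eq_adjoint, star_one]
  have hS : adjoint S = S := by
    rw [← comp_id (adjoint S), ← one_def, ← h, ← comp_assoc, hST, one_def, id_comp]
  have hSTS := hT.adjoint_conj S
  rwa [hS, h, one_def, comp_id] at hSTS

section Lc

variable {𝕜 H K : Type*} [RCLike 𝕜] [NormedAddCommGroup H] [InnerProductSpace 𝕜 H]
  [CompleteSpace H] [NormedAddCommGroup K] [InnerProductSpace 𝕜 K] [CompleteSpace K]

def Lc (Al : H →L[𝕜] K) (cr : K →L[𝕜] H) (R Rinv : H →L[𝕜] H) : K →L[𝕜] K :=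
  Al ∘L (R - R ∘L adjoint Al ∘L adjoint cr ∘L Rinv ∘L cr ∘L Al ∘L R) ∘L adjoint Al

def LcInv (Al : H →L[𝕜] K) (cr : K →L[𝕜] H) (Rinv : H →L[𝕜] H) : K →L[𝕜] K :=
  adjoint cr ∘L cr + Al ∘L Rinv ∘L adjoint Al

variable {Al : H →L[𝕜] K} {cr : K →L[𝕜] H} {R Rinv : H →L[𝕜] H}

theorem Lc_eq_conj :
    Lc Al cr R Rinv = Al ∘L
      (R - R * adjoint (cr ∘L Al) * Rinv * (cr ∘L Al) * R) ∘L adjoint Al := by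
  simp only [Lc, mul_def, adjoint_comp, comp_assoc]

theorem LcInv_eq_conj (hAl : Al ∘L adjoint Al = 1) :
    LcInv Al cr Rinv = Al ∘L (adjoint (cr ∘L Al) * (cr ∘L Al) + Rinv) ∘L adjoint Al := by
  have hcr : cr ∘L Al ∘L adjoint Al = cr := by rw [hAl, one_def, comp_id]
  simp only [LcInv, mul_def, adjoint_comp, add_comp, comp_add, comp_assoc, hcr]
  rw [← comp_assoc Al (adjoint Al), hAl, one_def, id_comp]

theorem eq_one_add_mul_mul_adjoint (hR : R = 1 + cr ∘L (Al ∘L R ∘L adjoint Al) ∘L adjoint cr) :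
    R = 1 + (cr ∘L Al) * R * adjoint (cr ∘L Al) :=
  hR.trans (by simp only [mul_def, adjoint_comp, comp_assoc])

theorem isPositive_LcInv (hRgeI : (R - 1).IsPositive) (hRinv : R ∘L Rinv = 1) :
    (LcInv Al cr Rinv).IsPositive := by
  have hR : R.IsPositive := by simpa using isPositive_one.add hRgeI
  exact (isPositive_adjoint_comp_self cr).add ((hR.of_comp_eq_one hRinv).conj_adjoint Al)

theorem Lc_comp_LcInv (hAl₁ : Al ∘L adjoint Al = 1) (hAl₂ : adjoint Al ∘L Al = 1)
    (hR : R = 1 + cr ∘L (Al ∘L R ∘L adjoint Al) ∘L adjoint cr)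
    (hRinv₁ : R ∘L Rinv = 1) (hRinv₂ : Rinv ∘L R = 1) :
    Lc Al cr R Rinv ∘L LcInv Al cr Rinv = 1 := by
  rw [Lc_eq_conj, LcInv_eq_conj hAl₁, conj_comp_conj hAl₂,
    woodbury_mul_eq_one (eq_one_add_mul_mul_adjoint hR) hRinv₁ hRinv₂, conj_one hAl₁]

theorem LcInv_comp_Lc (hAl₁ : Al ∘L adjoint Al = 1) (hAl₂ : adjoint Al ∘L Al = 1)
    (hR : R = 1 + cr ∘L (Al ∘L R ∘L adjoint Al) ∘L adjoint cr)
    (hRinv₁ : R ∘L Rinv = 1) (hRinv₂ : Rinv ∘L R = 1) :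
    LcInv Al cr Rinv ∘L Lc Al cr R Rinv = 1 := by
  rw [Lc_eq_conj, LcInv_eq_conj hAl₁, conj_comp_conj hAl₂,
    add_mul_woodbury_eq_one (eq_one_add_mul_mul_adjoint hR) hRinv₁ hRinv₂, conj_one hAl₁]

theorem isPositive_Lc (hAl₁ : Al ∘L adjoint Al = 1) (hAl₂ : adjoint Al ∘L Al = 1)
    (hR : R = 1 + cr ∘L (Al ∘L R ∘L adjoint Al) ∘L adjoint cr) (hRgeI : (R - 1).IsPositive)
    (hRinv₁ : R ∘L Rinv = 1) (hRinv₂ : Rinv ∘L R = 1) :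
    (Lc Al cr R Rinv).IsPositive :=
  (isPositive_LcInv hRgeI hRinv₁).of_comp_eq_one (LcInv_comp_Lc hAl₁ hAl₂ hR hRinv₁ hRinv₂)

theorem comp_Lc (hR : R = 1 + cr ∘L (Al ∘L R ∘L adjoint Al) ∘L adjoint cr)
    (hRinv : R ∘L Rinv = 1) :
    cr ∘L Lc Al cr R Rinv = Rinv ∘L cr ∘L Al ∘L R ∘L adjoint Al := by
  rw [Lc_eq_conj]
  calc cr ∘L Al ∘L (R - R * adjoint (cr ∘L Al) * Rinv * (cr ∘L Al) * R) ∘L adjoint Al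
      = ((cr ∘L Al) * (R - R * adjoint (cr ∘L Al) * Rinv * (cr ∘L Al) * R)) ∘L adjoint Al := by
        simp only [mul_def, comp_assoc]
    _ = (Rinv * (cr ∘L Al) * R) ∘L adjoint Al := by
        rw [mul_woodbury_eq (eq_one_add_mul_mul_adjoint hR) hRinv]
    _ = Rinv ∘L cr ∘L Al ∘L R ∘L adjoint Al := by simp only [mul_def, comp_assoc]

theorem LcInv_eq_one_add_sub (hAl₁ : Al ∘L adjoint Al = 1)
    (hR : R = 1 + cr ∘L (Al ∘L R ∘L adjoint Al) ∘L adjoint cr)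
    (hRinv₁ : R ∘L Rinv = 1) (hRinv₂ : Rinv ∘L R = 1) :
    LcInv Al cr Rinv =
      1 + adjoint cr ∘L cr - Al ∘L cr ∘L Lc Al cr R Rinv ∘L adjoint cr ∘L adjoint Al := by
  have hconj : Al ∘L cr ∘L Lc Al cr R Rinv ∘L adjoint cr ∘L adjoint Al
      = Al ∘L ((cr ∘L Al) * (R - R * adjoint (cr ∘L Al) * Rinv * (cr ∘L Al) * R)
          * adjoint (cr ∘L Al)) ∘L adjoint Al := by
    simp only [Lc_eq_conj, mul_def, adjoint_comp, comp_assoc]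
  rw [hconj, mul_woodbury_mul_eq (eq_one_add_mul_mul_adjoint hR) hRinv₁ hRinv₂, sub_comp,
    comp_sub, conj_one hAl₁, LcInv]
  abel

end Lc

theorem Lc_properties_general {q : ℕ} {T : Type}
    (Al : L2 T →L[ℂ] L2q q T)
    (hAlU₁ : Al ∘L adjoint Al = 1) (hAlU₂ : adjoint Al ∘L Al = 1)
    (cr : L2q q T →L[ℂ] L2 T)
    (R Rinv : L2 T →L[ℂ] L2 T)
    (hRid : R = 1 + cr ∘L (Al ∘L R ∘L adjoint Al) ∘L adjoint cr)
    (hRgeI : (R - 1).IsPositive)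
    (hRinv₁ : R ∘L Rinv = 1) (hRinv₂ : Rinv ∘L R = 1) :
    ∃ Linv : L2q q T →L[ℂ] L2q q T,
      (Al ∘L (R - R ∘L adjoint Al ∘L adjoint cr ∘L Rinv ∘L cr ∘L Al ∘L R)
          ∘L adjoint Al).IsPositive ∧
      (Al ∘L (R - R ∘L adjoint Al ∘L adjoint cr ∘L Rinv ∘L cr ∘L Al ∘L R)
          ∘L adjoint Al) ∘L Linv = 1 ∧
      Linv ∘L (Al ∘L (R - R ∘L adjoint Al ∘L adjoint cr ∘L Rinv ∘L cr ∘L Al ∘L R)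
          ∘L adjoint Al) = 1 ∧
      Linv = adjoint cr ∘L cr + Al ∘L Rinv ∘L adjoint Al ∧
      Linv = 1 + adjoint cr ∘L cr -
        Al ∘L cr ∘L
          (Al ∘L (R - R ∘L adjoint Al ∘L adjoint cr ∘L Rinv ∘L cr ∘L Al ∘L R)
            ∘L adjoint Al) ∘L adjoint cr ∘L adjoint Al ∧
      cr ∘L (Al ∘L (R - R ∘L adjoint Al ∘L adjoint cr ∘L Rinv ∘L cr ∘L Al ∘L R)
          ∘L adjoint Al) = Rinv ∘L cr ∘L Al ∘L R ∘L adjoint Al := by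
  exact ⟨LcInv Al cr Rinv, isPositive_Lc hAlU₁ hAlU₂ hRid hRgeI hRinv₁ hRinv₂,
    Lc_comp_LcInv hAlU₁ hAlU₂ hRid hRinv₁ hRinv₂, LcInv_comp_Lc hAlU₁ hAlU₂ hRid hRinv₁ hRinv₂,
    rfl, LcInv_eq_one_add_sub hAlU₁ hRid hRinv₁ hRinv₂, comp_Lc hRid hRinv₁⟩

/-- Let `c ∈ B(T)`, `R_c = Σ_{n≥0}(cα)ⁿ(α*c*)ⁿ` (invertible,
with `R_c = I + c(αR_cα*)c*` and `R_c ≥ I`), and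
`L_c = α(R_c − R_c α* c* R_c⁻¹ c α R_c)α*`.  Then `L_c > 0`,
`L_c⁻¹ = c*c + α R_c⁻¹ α* = I + c*c − αcL_c c*α*`, and
`cL_c = R_c⁻¹ c α R_c α*`.  Here `Al` is the unitary column of the primitive
shifts and `cr` the row operator `g ↦ Σⱼ cⱼ gⱼ`, so that `cα = cr ∘ Al`. -/
theorem Lc_properties {q : ℕ} (hq : 1 ≤ q) {T : Type} [DecidableEq T]
    (S : HomTree q T) (A : Fin q → (L2 T →L[ℂ] L2 T))
    (hA : ∀ (j : Fin q) (f : L2 T) (t : T), A j f t = f (S.shift j t))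
    (Al : L2 T →L[ℂ] L2q q T)
    (hAl : ∀ (f : L2 T) (j : Fin q), Al f j = A j f)
    (hAlU₁ : Al ∘L adjoint Al = 1) (hAlU₂ : adjoint Al ∘L Al = 1)
    (c : Fin q → (L2 T →L[ℂ] L2 T)) (hc : ∀ j, IsConst S (c j))
    (cr : L2q q T →L[ℂ] L2 T)
    (hcr : ∀ g : L2q q T, cr g = ∑ j, c j (g j))
    (hrad : spectralRadius ℂ (cr ∘L Al) < 1)
    (R Rinv : L2 T →L[ℂ] L2 T)
    (hR : HasSum (fun n : ℕ =>
      ((cr ∘L Al) ^ n) ∘L ((adjoint (cr ∘L Al)) ^ n)) R)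
    (hRid : R = 1 + cr ∘L (Al ∘L R ∘L adjoint Al) ∘L adjoint cr)
    (hRgeI : (R - 1).IsPositive)
    (hRinv₁ : R ∘L Rinv = 1) (hRinv₂ : Rinv ∘L R = 1) :
    ∃ Linv : L2q q T →L[ℂ] L2q q T,
      (Al ∘L (R - R ∘L adjoint Al ∘L adjoint cr ∘L Rinv ∘L cr ∘L Al ∘L R)
          ∘L adjoint Al).IsPositive ∧
      (Al ∘L (R - R ∘L adjoint Al ∘L adjoint cr ∘L Rinv ∘L cr ∘L Al ∘L R)
          ∘L adjoint Al) ∘L Linv = 1 ∧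
      Linv ∘L (Al ∘L (R - R ∘L adjoint Al ∘L adjoint cr ∘L Rinv ∘L cr ∘L Al ∘L R)
          ∘L adjoint Al) = 1 ∧
      Linv = adjoint cr ∘L cr + Al ∘L Rinv ∘L adjoint Al ∧
      Linv = 1 + adjoint cr ∘L cr -
        Al ∘L cr ∘L
          (Al ∘L (R - R ∘L adjoint Al ∘L adjoint cr ∘L Rinv ∘L cr ∘L Al ∘L R)
            ∘L adjoint Al) ∘L adjoint cr ∘L adjoint Al ∧
      cr ∘L (Al ∘L (R - R ∘L adjoint Al ∘L adjoint cr ∘L Rinv ∘L cr ∘L Al ∘L R)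
          ∘L adjoint Al) = Rinv ∘L cr ∘L Al ∘L R ∘L adjoint Al :=
  Lc_properties_general Al hAlU₁ hAlU₂ cr R Rinv hRid hRgeI hRinv₁ hRinv₂

end Multiscale
end
end

section
/- For c ∈ B(T), the Blaschke factor B_c = (α* − c)(I − L_c c* α*)^{-1} √(L_c) is a unitary operator from ℓ²(T)^q to ℓ²(T); in particular B_c* B_c = I. -/
open scoped InnerProductSpace ENNReal
open ContinuousLinearMap (adjoint)

noncomputable section

namespace Multiscale

variable {q : ℕ} {T : Type} [DecidableEq T]

/-!
Write `M = α* − c`, `X = I − L_c c* α*` (so `J = X⁻¹` and `X* = I − α c L_c`). The key identity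
reads `X* L_c⁻¹ X = M* M`, hence `B_c* B_c = √L_c J* X* L_c⁻¹ X J √L_c = √L_c L_c⁻¹ √L_c = I`.
For the other product the same identity gives `M* (B_c B_c*) = X* L_c⁻¹ X J L_c J* M* = M*`, and
`M* = α − c*` is injective because `α* (α − c*) = (I − cα)*` is invertible when the spectral
radius of `cα` is less than one.
-/

theorem mul_mul_eq_one_of_mul_self_eq {M : Type*} [Monoid M] {q p p' : M} (hq : q * q = p)
    (hp : p * p' = 1) (hp' : p' * p = 1) : q * p' * q = 1 := by
  have hcomm : q * p' = p' * q :=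
    calc q * p' = p' * (q * q) * q * p' := by rw [hq, hp', one_mul]
      _ = p' * q * (q * q * p') := by simp only [mul_assoc]
      _ = p' * q := by rw [hq, hp, mul_one]
  rw [hcomm, mul_assoc, hq, hp']

theorem isUnit_one_sub_of_spectralRadius_lt_one {𝕜 A : Type*} [NormedField 𝕜] [NormedRing A]
    [NormedAlgebra 𝕜 A] {a : A} (ha : spectralRadius 𝕜 a < 1) : IsUnit (1 - a) := by
  have h := spectrum.mem_resolventSet_of_spectralRadius_lt (k := (1 : 𝕜)) (by simpa using ha)
  rwa [spectrum.mem_resolventSet_iff, map_one] at h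

variable {𝕜 H K : Type*} [RCLike 𝕜]
  [NormedAddCommGroup H] [InnerProductSpace 𝕜 H] [CompleteSpace H]
  [NormedAddCommGroup K] [InnerProductSpace 𝕜 K] [CompleteSpace K]

open ContinuousLinearMap

theorem injective_sub_adjoint_of_spectralRadius_lt_one {V : K →L[𝕜] H}
    (hV : adjoint V ∘L V = 1) {C : H →L[𝕜] K} (hC : spectralRadius 𝕜 (C ∘L V) < 1) :
    Function.Injective (V - adjoint C) := by
  have hcomp : adjoint V ∘L (V - adjoint C) = star (1 - C ∘L V) := by
    rw [comp_sub, hV, star_sub, star_one, star_eq_adjoint, adjoint_comp]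
  have hunit : IsUnit (adjoint V ∘L (V - adjoint C)) :=
    hcomp ▸ (isUnit_one_sub_of_spectralRadius_lt_one hC).star
  exact Function.Injective.of_comp (f := adjoint V) (isUnit_iff_bijective.mp hunit).injective

section BlaschkeFactor

variable {M : H →L[𝕜] K} {X J Pinv Q : H →L[𝕜] H}

theorem adjoint_comp_self_eq_one_of_key (hQ : adjoint Q = Q)
    (hkey : adjoint X ∘L Pinv ∘L X = adjoint M ∘L M) (hXJ : X ∘L J = 1)
    (hQPQ : Q ∘L Pinv ∘L Q = 1) :
    adjoint (M ∘L J ∘L Q) ∘L (M ∘L J ∘L Q) = 1 := by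
  have hJX : adjoint J ∘L adjoint X = 1 := by
    rw [← adjoint_comp, hXJ, ← star_eq_adjoint, star_one]
  calc adjoint (M ∘L J ∘L Q) ∘L (M ∘L J ∘L Q)
      = Q ∘L adjoint J ∘L (adjoint M ∘L M) ∘L J ∘L Q := by
        simp only [adjoint_comp, hQ, comp_assoc]
    _ = Q ∘L (adjoint J ∘L adjoint X) ∘L Pinv ∘L (X ∘L J) ∘L Q := by
        simp only [← hkey, comp_assoc]
    _ = 1 := by rw [hJX, hXJ]; exact hQPQ

theorem self_comp_adjoint_eq_one_of_key {P : H →L[𝕜] H} (hQ : adjoint Q = Q) (hQQ : Q ∘L Q = P)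
    (hkey : adjoint X ∘L Pinv ∘L X = adjoint M ∘L M) (hXJ : X ∘L J = 1) (hJX : J ∘L X = 1)
    (hPinvP : Pinv ∘L P = 1) (hM : Function.Injective (adjoint M)) :
    (M ∘L J ∘L Q) ∘L adjoint (M ∘L J ∘L Q) = 1 := by
  have hXJ' : adjoint X ∘L adjoint J = 1 := by
    rw [← adjoint_comp, hJX, ← star_eq_adjoint, star_one]
  have hBB : (M ∘L J ∘L Q) ∘L adjoint (M ∘L J ∘L Q) = M ∘L J ∘L P ∘L adjoint J ∘L adjoint M := by
    simp only [adjoint_comp, hQ, comp_assoc, ← hQQ]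
  have hcancel : adjoint M ∘L (M ∘L J ∘L P ∘L adjoint J ∘L adjoint M) = adjoint M ∘L 1 :=
    calc adjoint M ∘L (M ∘L J ∘L P ∘L adjoint J ∘L adjoint M)
        = adjoint X ∘L Pinv ∘L (X ∘L J) ∘L P ∘L adjoint J ∘L adjoint M := by
          simp only [← comp_assoc, ← hkey]
      _ = adjoint X ∘L (Pinv ∘L P) ∘L adjoint J ∘L adjoint M := by rw [hXJ]; rfl
      _ = (adjoint X ∘L adjoint J) ∘L adjoint M := by rw [hPinvP]; rfl
      _ = adjoint M ∘L 1 := by rw [hXJ']; rfl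
  rw [hBB]
  ext x
  exact hM (congrArg (· x) hcancel)

end BlaschkeFactor

/-- Here `Al` is the unitary column `α` of the primitive shifts, `cr` the row operator `c`,
`L = L_c`, `Linv = L_c⁻¹`, `sqL = √(L_c)` and `J = (I − L_c c* α*)⁻¹`. -/
theorem blaschke_factor_unitary_general {q : ℕ} {T : Type}
    (Al : L2 T →L[ℂ] L2q q T)
    (hAlU₂ : adjoint Al ∘L Al = 1)
    (cr : L2q q T →L[ℂ] L2 T)
    (hrad : spectralRadius ℂ (cr ∘L Al) < 1)
    (L Linv : L2q q T →L[ℂ] L2q q T)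
    (hLpos : L.IsPositive)
    (hLinv₁ : L ∘L Linv = 1) (hLinv₂ : Linv ∘L L = 1)
    (hkey : (1 - Al ∘L cr ∘L L) ∘L Linv ∘L (1 - L ∘L adjoint cr ∘L adjoint Al)
      = (Al - adjoint cr) ∘L (adjoint Al - cr))
    (sqL : L2q q T →L[ℂ] L2q q T)
    (hsqL : sqL.IsPositive ∧ sqL ∘L sqL = L)
    (J : L2q q T →L[ℂ] L2q q T)
    (hJ₁ : (1 - L ∘L adjoint cr ∘L adjoint Al) ∘L J = 1)
    (hJ₂ : J ∘L (1 - L ∘L adjoint cr ∘L adjoint Al) = 1) :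
    adjoint ((adjoint Al - cr) ∘L J ∘L sqL) ∘L ((adjoint Al - cr) ∘L J ∘L sqL)
        = 1 ∧
      ((adjoint Al - cr) ∘L J ∘L sqL) ∘L
        adjoint ((adjoint Al - cr) ∘L J ∘L sqL) = 1 := by
  have hM : adjoint (adjoint Al - cr) = Al - adjoint cr := by
    rw [map_sub, adjoint_adjoint]
  have hX : adjoint (1 - L ∘L adjoint cr ∘L adjoint Al) = 1 - Al ∘L cr ∘L L := by
    rw [map_sub, ← star_eq_adjoint 1, star_one, adjoint_comp, adjoint_comp, adjoint_adjoint,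
      adjoint_adjoint, hLpos.isSelfAdjoint.adjoint_eq, comp_assoc]
  rw [← hX, ← hM] at hkey
  have hsqLsa : adjoint sqL = sqL := hsqL.1.isSelfAdjoint.adjoint_eq
  have hinj : Function.Injective (adjoint (adjoint Al - cr)) :=
    hM ▸ injective_sub_adjoint_of_spectralRadius_lt_one hAlU₂ hrad
  exact ⟨adjoint_comp_self_eq_one_of_key hsqLsa hkey hJ₁
      (mul_mul_eq_one_of_mul_self_eq hsqL.2 hLinv₁ hLinv₂),
    self_comp_adjoint_eq_one_of_key hsqLsa hsqL.2 hkey hJ₁ hJ₂ hLinv₂ hinj⟩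

/-- For `c ∈ B(T)`, the Blaschke factor
`B_c = (α* − c)(I − L_c c* α*)⁻¹ √(L_c)` is a unitary operator from `ℓ²(T)^q`
to `ℓ²(T)`; in particular `B_c* B_c = I`.  Here `Al` is the unitary column of
the primitive shifts, `cr` the row operator of `c`, `R` = `R_c`, `L` = `L_c`,
`sqL = √(L_c)`, and `J = (I − L_c c* α*)⁻¹`. -/
theorem blaschke_factor_unitary {q : ℕ} (hq : 1 ≤ q) {T : Type} [DecidableEq T]
    (S : HomTree q T) (A : Fin q → (L2 T →L[ℂ] L2 T))
    (hA : ∀ (j : Fin q) (f : L2 T) (t : T), A j f t = f (S.shift j t))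
    (Al : L2 T →L[ℂ] L2q q T)
    (hAl : ∀ (f : L2 T) (j : Fin q), Al f j = A j f)
    (hAlU₁ : Al ∘L adjoint Al = 1) (hAlU₂ : adjoint Al ∘L Al = 1)
    (c : Fin q → (L2 T →L[ℂ] L2 T)) (hc : ∀ j, IsConst S (c j))
    (cr : L2q q T →L[ℂ] L2 T)
    (hcr : ∀ g : L2q q T, cr g = ∑ j, c j (g j))
    (hrad : spectralRadius ℂ (cr ∘L Al) < 1)
    (R Rinv : L2 T →L[ℂ] L2 T)
    (hR : HasSum (fun n : ℕ =>
      ((cr ∘L Al) ^ n) ∘L ((adjoint (cr ∘L Al)) ^ n)) R)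
    (hRid : R = 1 + cr ∘L (Al ∘L R ∘L adjoint Al) ∘L adjoint cr)
    (hRgeI : (R - 1).IsPositive)
    (hRinv₁ : R ∘L Rinv = 1) (hRinv₂ : Rinv ∘L R = 1)
    (L Linv : L2q q T →L[ℂ] L2q q T)
    (hL : L = Al ∘L (R - R ∘L adjoint Al ∘L adjoint cr ∘L Rinv ∘L cr ∘L Al ∘L R)
      ∘L adjoint Al)
    (hLpos : L.IsPositive)
    (hLinv₁ : L ∘L Linv = 1) (hLinv₂ : Linv ∘L L = 1)
    (hLinv : Linv = adjoint cr ∘L cr + Al ∘L Rinv ∘L adjoint Al)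
    (hcL : cr ∘L L = Rinv ∘L cr ∘L Al ∘L R ∘L adjoint Al)
    (hkey : (1 - Al ∘L cr ∘L L) ∘L Linv ∘L (1 - L ∘L adjoint cr ∘L adjoint Al)
      = (Al - adjoint cr) ∘L (adjoint Al - cr))
    (sqL : L2q q T →L[ℂ] L2q q T)
    (hsqL : sqL.IsPositive ∧ sqL ∘L sqL = L)
    (J : L2q q T →L[ℂ] L2q q T)
    (hJ₁ : (1 - L ∘L adjoint cr ∘L adjoint Al) ∘L J = 1)
    (hJ₂ : J ∘L (1 - L ∘L adjoint cr ∘L adjoint Al) = 1) :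
    adjoint ((adjoint Al - cr) ∘L J ∘L sqL) ∘L ((adjoint Al - cr) ∘L J ∘L sqL)
        = 1 ∧
      ((adjoint Al - cr) ∘L J ∘L sqL) ∘L
        adjoint ((adjoint Al - cr) ∘L J ∘L sqL) = 1 :=
  blaschke_factor_unitary_general Al hAlU₂ cr hrad L Linv hLpos hLinv₁ hLinv₂ hkey sqL hsqL J hJ₁
    hJ₂
end Multiscale
end
end

section
/- Given the identities L_c^{-1} = c*c + αR_c^{-1}α* and cL_c = R_c^{-1}cαR_cα*, one has the factorization (I − αcL_c) L_c^{-1} (I − L_c c*α*) = (α − c*)(α* − c). -/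
open ContinuousLinearMap (adjoint)

noncomputable section

namespace Multiscale

/-- Let `α : H → K` be a unitary column operator (`K` playing the
role of `H^q`), `c : K → H` a bounded (row) operator, `R` a positive invertible
operator on `H` with `R = I + c(αRα*)c*`, and
`L = α(R − Rα*c*R⁻¹cαR)α*`, positive invertible with
`L⁻¹ = c*c + αR⁻¹α*` and `cL = R⁻¹cαRα*`.  Then one has the factorization
`(I − αcL) L⁻¹ (I − L c*α*) = (α − c*)(α* − c)`. -/
theorem blaschke_factorization {H K : Type} [NormedAddCommGroup H]
    [InnerProductSpace ℂ H] [CompleteSpace H] [NormedAddCommGroup K]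
    [InnerProductSpace ℂ K] [CompleteSpace K]
    (α : H →L[ℂ] K) (hU₁ : α ∘L adjoint α = 1) (hU₂ : adjoint α ∘L α = 1)
    (c : K →L[ℂ] H)
    (R Rinv : H →L[ℂ] H) (hRpos : R.IsPositive)
    (hRinv₁ : R ∘L Rinv = 1) (hRinv₂ : Rinv ∘L R = 1)
    (hRid : R = 1 + c ∘L (α ∘L R ∘L adjoint α) ∘L adjoint c)
    (L Linv : K →L[ℂ] K)
    (hL : L = α ∘L (R - R ∘L adjoint α ∘L adjoint c ∘L Rinv ∘L c ∘L α ∘L R)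
      ∘L adjoint α)
    (hLpos : L.IsPositive)
    (hLinv₁ : L ∘L Linv = 1) (hLinv₂ : Linv ∘L L = 1)
    (hLinv : Linv = adjoint c ∘L c + α ∘L Rinv ∘L adjoint α)
    (hcL : c ∘L L = Rinv ∘L c ∘L α ∘L R ∘L adjoint α) :
    (1 - α ∘L c ∘L L) ∘L Linv ∘L (1 - L ∘L adjoint c ∘L adjoint α)
      = (α - adjoint c) ∘L (adjoint α - c) := by
  have hR1 : c ∘L (α ∘L R ∘L adjoint α) ∘L adjoint c = R - 1 := by
    nth_rewrite 2 [hRid]; abel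
  have h1 : (c ∘L L) ∘L adjoint c = 1 - Rinv := by
    rw [hcL]
    calc (Rinv ∘L c ∘L α ∘L R ∘L adjoint α) ∘L adjoint c
        = Rinv ∘L (c ∘L (α ∘L R ∘L adjoint α) ∘L adjoint c) := by
          simp only [ContinuousLinearMap.comp_assoc]
      _ = Rinv ∘L (R - 1) := by rw [hR1]
      _ = 1 - Rinv := by
          simp only [ContinuousLinearMap.comp_sub, hRinv₂,
            ContinuousLinearMap.one_def, ContinuousLinearMap.comp_id]
  -- expand LHS
  have expand : (1 - α ∘L c ∘L L) ∘L Linv ∘L (1 - L ∘L adjoint c ∘L adjoint α)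
      = Linv - Linv ∘L L ∘L adjoint c ∘L adjoint α
        - (α ∘L c ∘L L) ∘L Linv
        + (α ∘L c ∘L L) ∘L Linv ∘L L ∘L adjoint c ∘L adjoint α := by
    simp only [ContinuousLinearMap.comp_sub, ContinuousLinearMap.sub_comp,
      ContinuousLinearMap.one_def, ContinuousLinearMap.comp_id,
      ContinuousLinearMap.id_comp, ContinuousLinearMap.comp_assoc]
    abel
  rw [expand]
  have e1 : Linv ∘L L ∘L adjoint c ∘L adjoint α = adjoint c ∘L adjoint α := by
    rw [← ContinuousLinearMap.comp_assoc Linv, hLinv₂,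
      ContinuousLinearMap.one_def, ContinuousLinearMap.id_comp]
  have e2 : (α ∘L c ∘L L) ∘L Linv = α ∘L c := by
    simp only [ContinuousLinearMap.comp_assoc]
    rw [hLinv₁, ContinuousLinearMap.one_def, ContinuousLinearMap.comp_id]
  have e3 : (α ∘L c ∘L L) ∘L adjoint c ∘L adjoint α
      = α ∘L adjoint α - α ∘L Rinv ∘L adjoint α := by
    calc (α ∘L c ∘L L) ∘L adjoint c ∘L adjoint α
        = α ∘L (((c ∘L L) ∘L adjoint c) ∘L adjoint α) := by
          simp only [ContinuousLinearMap.comp_assoc]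
      _ = α ∘L (1 - Rinv) ∘L adjoint α := by
          rw [h1]
      _ = α ∘L adjoint α - α ∘L Rinv ∘L adjoint α := by
          simp only [ContinuousLinearMap.comp_sub, ContinuousLinearMap.sub_comp,
            ContinuousLinearMap.one_def, ContinuousLinearMap.id_comp]
  rw [e1, e2, e3, hLinv]
  simp only [ContinuousLinearMap.comp_sub, ContinuousLinearMap.sub_comp,
    ContinuousLinearMap.comp_assoc]
  abel

end Multiscale
end
end

section
/- Let F ∈ H_2(T) with expansion F = Σ_w w* F_[w], F_[w] ∈ C_2. For each primitive shift index j, the operator A_j F := (F − F_[∅])α_j maps H_2(T) into itself and equals the Hilbert-space adjoint of the right multiplication operator M̂_{α_j*} on H_2(T): ⟨F, Gα_j*⟩_2 = ⟨A_j F, G⟩_2 for all F, G ∈ H_2(T). Moreover M̂_{α_i*} A_j = (I − C*C) if i = j and 0 if i ≠ j, where C F := F_[∅]. -/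
open scoped InnerProductSpace ENNReal
open ContinuousLinearMap (adjoint)

noncomputable section

namespace Multiscale

variable {q : ℕ} {T : Type} [DecidableEq T]

lemma single_one_apply (t u : T) : (lp.single 2 t (1:ℂ) : L2 T) u = if u = t then 1 else 0 := by
  rw [lp.single_apply]
  by_cases h : u = t
  · subst h; simp
  · simp [h]

lemma inner_single_eval (t : T) (f : L2 T) : ⟪(lp.single 2 t 1 : L2 T), f⟫_ℂ = f t := by
  rw [lp.inner_single_left]; simp [RCLike.inner_apply]

lemma apply_eq_tsum (X : L2 T →L[ℂ] L2 T) (g : L2 T) (u : T) :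
    X g u = ∑' t, g t * X (lp.single 2 t 1) u := by
  have h1 : HasSum (fun t : T => (lp.single 2 t (g t) : L2 T)) g :=
    lp.hasSum_single ENNReal.ofNat_ne_top g
  have h3 := (h1.mapL X).mapL (innerSL ℂ (lp.single 2 u 1 : L2 T))
  have h4 : (fun t : T => (innerSL ℂ (lp.single 2 u 1 : L2 T)) (X (lp.single 2 t (g t))))
      = fun t : T => g t * X (lp.single 2 t 1) u := by
    funext t
    have hs : (lp.single 2 t (g t) : L2 T) = g t • lp.single 2 t 1 := by
      rw [← lp.single_smul]; norm_num
    rw [hs, map_smul]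
    simp [inner_single_eval, inner_smul_right]
  rw [h4] at h3
  rw [← inner_single_eval u (X g)]
  exact h3.tsum_eq.symm

lemma causal_single_eq_zero {S : HomTree q T} {X : L2 T →L[ℂ] L2 T} (hX : Causal S X)
    {t s : T} (h : ¬ S.ple t s) : X (lp.single 2 t 1) s = 0 := by
  refine hX s _ (fun u hu => ?_) s ⟨0, 0, le_rfl, rfl⟩
  rw [single_one_apply]
  split_ifs with h'
  · exact absurd (h' ▸ hu) h
  · rfl

lemma slide {f : T → T} {a b : ℕ} {x y : T} (h : f^[a] x = f^[b] y) (k : ℕ) :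
    f^[a+k] x = f^[b+k] y := by
  rw [Nat.add_comm a k, Nat.add_comm b k, Function.iterate_add_apply,
    Function.iterate_add_apply, h]

lemma iter_eq_imp {S : HomTree q T} {t : T} {a b : ℕ} (hab : a ≤ b)
    (h : S.parent^[a] t = S.parent^[b] t) : a = b := by
  obtain ⟨d, rfl⟩ := Nat.exists_eq_add_of_le hab
  have hd : S.parent^[d] (S.parent^[a] t) = S.parent^[a] t := by
    rw [← Function.iterate_add_apply, Nat.add_comm d a, ← h]
  have := S.acyclic _ d hd
  omega

lemma shift_iter (S : HomTree q T) (j : Fin q) (t : T) (k : ℕ) :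
    S.parent^[k+1] (S.shift j t) = S.parent^[k] t := by
  rw [Function.iterate_succ_apply, S.parent_shift]

lemma not_ple_shift (S : HomTree q T) (j : Fin q) {s t : T} (h : S.horo s t) :
    ¬ S.ple (S.shift j t) s := by
  rintro ⟨m, n, hmn, heq⟩
  obtain ⟨N, hN⟩ := h
  have h1 := slide heq (N+1)
  rw [show m+(N+1) = (m+N)+1 by omega, shift_iter] at h1
  have h2 := slide hN (n+1)
  have h3 : S.parent^[m+N] t = S.parent^[N+(n+1)] t := by
    rw [h1, show n+(N+1) = N+(n+1) by omega, ← h2]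
  have := iter_eq_imp (by omega : m+N ≤ N+(n+1)) h3
  omega

lemma ple_shift (S : HomTree q T) (j : Fin q) {s u s₀ : T} (h1 : ¬ S.horo u s)
    (h2 : S.ple s u) (h3 : S.ple u s₀) : S.ple (S.shift j s) s₀ := by
  obtain ⟨a, b, hab, he2⟩ := h2
  obtain ⟨m, n, hmn, he3⟩ := h3
  by_cases hc : a = b ∧ m = n
  · exact absurd ⟨b, by rw [hc.1] at he2; exact he2.symm⟩ h1
  refine ⟨a + m + 1, n + b, by omega, ?_⟩
  have k1 : S.parent^[a+m+1] (S.shift j s) = S.parent^[a+m] s := shift_iter S j s (a+m)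
  have k2 := slide he2 m
  have k3 := slide he3 b
  rw [k1, k2, show b+m = m+b by omega, k3]

lemma A_single (S : HomTree q T) {A : Fin q → (L2 T →L[ℂ] L2 T)}
    (hA : ∀ (j : Fin q) (f : L2 T) (t : T), A j f t = f (S.shift j t)) (j : Fin q) (s : T) :
    A j (lp.single 2 (S.shift j s) 1) = lp.single 2 s 1 := by
  apply lp.ext; funext t
  rw [hA, single_one_apply, single_one_apply]
  by_cases h : t = s
  · subst h; simp
  · rw [if_neg (fun hc => h (S.shift_inj j j t s hc).2), if_neg h]

lemma A_single_zero (S : HomTree q T) {A : Fin q → (L2 T →L[ℂ] L2 T)}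
    (hA : ∀ (j : Fin q) (f : L2 T) (t : T), A j f t = f (S.shift j t)) (j : Fin q) {t : T}
    (h : ∀ s, S.shift j s ≠ t) : A j (lp.single 2 t 1) = 0 := by
  apply lp.ext; funext u
  rw [hA, single_one_apply, if_neg (h u)]
  simp

lemma adj_single (S : HomTree q T) {A : Fin q → (L2 T →L[ℂ] L2 T)}
    (hA : ∀ (j : Fin q) (f : L2 T) (t : T), A j f t = f (S.shift j t)) (j : Fin q) (t : T) :
    adjoint (A j) (lp.single 2 t 1) = lp.single 2 (S.shift j t) 1 := by
  apply lp.ext; funext s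
  rw [show (adjoint (A j) (lp.single 2 t 1) : L2 T) s
      = ⟪(lp.single 2 s 1 : L2 T), adjoint (A j) (lp.single 2 t 1)⟫_ℂ
      from (inner_single_eval s _).symm]
  rw [ContinuousLinearMap.adjoint_inner_right, lp.inner_single_right, hA, single_one_apply,
    single_one_apply]
  by_cases h : s = S.shift j t
  · rw [if_pos h.symm, if_pos h]; simp [RCLike.inner_apply]
  · rw [if_neg (fun hc => h hc.symm), if_neg h]; simp [RCLike.inner_apply]

lemma inner_eq_zero_of (f g : L2 T) (h : ∀ u, f u = 0 ∨ g u = 0) : ⟪f, g⟫_ℂ = 0 := by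
  rw [lp.inner_eq_tsum]
  convert tsum_zero with u
  rcases h u with h | h <;> simp [h, RCLike.inner_apply]


set_option maxHeartbeats 1000000 in
/-- For `F ∈ H₂(T)` with constant term `F_[∅]` (the horocycle
diagonal part of `F`), the backward-shift operator
`A_j F = (F − F_[∅]) αⱼ` maps `H₂(T)` into itself and is the Hilbert-space
adjoint of the right multiplication `M̂_{αⱼ*}` on `H₂(T)`:
`⟨F, G αⱼ*⟩₂ = ⟨A_j F, G⟩₂`.  Moreover `M̂_{αᵢ*} A_j = (I − C*C)` if `i = j`
and `0` otherwise, where `C F = F_[∅]`, i.e.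
`(A_j F) αᵢ* = F − F_[∅]` if `i = j` and `0` otherwise. -/
theorem backward_shift_properties {q : ℕ} (hq : 1 ≤ q) {T : Type}
    [DecidableEq T]
    (S : HomTree q T) (A : Fin q → (L2 T →L[ℂ] L2 T))
    (hA : ∀ (j : Fin q) (f : L2 T) (t : T), A j f t = f (S.shift j t))
    (hCuntz₁ : ∀ i j : Fin q, A i ∘L adjoint (A j) = if i = j then 1 else 0)
    (hCuntz₂ : (∑ j : Fin q, adjoint (A j) ∘L A j) = 1)
    (j : Fin q)
    (F F0 : L2 T →L[ℂ] L2 T) (hF : Causal S F) (hFHS : HSSummable F)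
    (hF0 : ∀ t s : T, (S.horo s t → F0 (lp.single 2 t 1) s = F (lp.single 2 t 1) s) ∧
      (¬ S.horo s t → F0 (lp.single 2 t 1) s = 0)) :
    (Causal S ((F - F0) ∘L A j) ∧ HSSummable ((F - F0) ∘L A j)) ∧
    (∀ G : L2 T →L[ℂ] L2 T, Causal S G → HSSummable G →
      hsInner F (G ∘L adjoint (A j)) = hsInner ((F - F0) ∘L A j) G) ∧
    (∀ i : Fin q, ((F - F0) ∘L A j) ∘L adjoint (A i)
      = if i = j then F - F0 else 0) := by
  -- value of the column of `F - F0` off the horocycle / on it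
  have hcol : ∀ t u : T, S.horo u t → ((F - F0) (lp.single 2 t 1) : L2 T) u = 0 := by
    intro t u hh
    rw [ContinuousLinearMap.sub_apply, lp.coeFn_sub, Pi.sub_apply, (hF0 t u).1 hh, sub_self]
  have hcol' : ∀ t u : T, ¬ S.horo u t →
      ((F - F0) (lp.single 2 t 1) : L2 T) u = F (lp.single 2 t 1) u := by
    intro t u hh
    rw [ContinuousLinearMap.sub_apply, lp.coeFn_sub, Pi.sub_apply, (hF0 t u).2 hh, sub_zero]
  -- norm comparison ‖(F-F0)eₜ‖² ≤ ‖F eₜ‖²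
  have hnorm : ∀ s : T, ‖(F - F0) (lp.single 2 s 1)‖ ^ 2 ≤ ‖F (lp.single 2 s 1)‖ ^ 2 := by
    intro s
    set x := (F - F0) (lp.single 2 s 1) with hx
    set y := F0 (lp.single 2 s 1) with hy
    have hxy : x + y = F (lp.single 2 s 1) := by
      rw [hx, hy, ContinuousLinearMap.sub_apply, sub_add_cancel]
    have horth : ⟪x, y⟫_ℂ = 0 := by
      refine inner_eq_zero_of _ _ (fun u => ?_)
      by_cases hh : S.horo u s
      · exact Or.inl (hcol s u hh)
      · exact Or.inr ((hF0 s u).2 hh)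
    have := norm_add_sq (𝕜 := ℂ) x y
    rw [horth] at this
    simp only [map_zero, mul_zero, add_zero, zero_add] at this
    rw [← hxy, this]
    nlinarith [sq_nonneg ‖y‖]
  have hinj : Function.Injective (S.shift j) := fun a b h => (S.shift_inj j j a b h).2
  refine ⟨⟨?_, ?_⟩, ?_, ?_⟩
  · -- Causal
    intro s₀ f hf u hu
    rw [ContinuousLinearMap.comp_apply, apply_eq_tsum]
    have hterm : ∀ t : T, (A j f) t * ((F - F0) (lp.single 2 t 1) : L2 T) u = 0 := by
      intro t
      rw [hA]
      by_cases hp : S.ple (S.shift j t) s₀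
      · rw [hf _ hp, zero_mul]
      · have hz : ((F - F0) (lp.single 2 t 1) : L2 T) u = 0 := by
          by_cases hh : S.horo u t
          · exact hcol t u hh
          · rw [hcol' t u hh]
            exact causal_single_eq_zero hF (fun hc => hp (ple_shift S j hh hc hu))
        rw [hz, mul_zero]
    rw [tsum_congr hterm, tsum_zero]
  · -- Hilbert-Schmidt
    set φ : T → ℝ := fun t =>
      if S.shift j (S.parent t) = t then ‖F (lp.single 2 (S.parent t) 1)‖ ^ 2 else 0 with hφ
    have hφ0 : ∀ x ∉ Set.range (S.shift j), φ x = 0 := by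
      intro x hx
      rw [hφ]
      by_cases h : S.shift j (S.parent x) = x
      · exact absurd ⟨S.parent x, h⟩ hx
      · simp [h]
    have hφs : Summable φ := by
      refine (Function.Injective.summable_iff hinj hφ0).mp ?_
      have : (φ ∘ S.shift j) = fun s => ‖F (lp.single 2 s 1)‖ ^ 2 := by
        funext s
        simp [hφ, Function.comp, S.parent_shift]
      rw [this]
      exact hFHS
    refine Summable.of_nonneg_of_le (fun t => by positivity) (fun t => ?_) hφs
    rw [ContinuousLinearMap.comp_apply]
    by_cases h : S.shift j (S.parent t) = t
    · have hAe : A j (lp.single 2 t 1) = lp.single 2 (S.parent t) 1 := by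
        have := A_single S hA j (S.parent t)
        rwa [h] at this
      rw [hAe, hφ]
      simp only [if_pos h]
      exact hnorm (S.parent t)
    · have hAe : A j (lp.single 2 t 1) = 0 := by
        refine A_single_zero S hA j (fun s hs => h ?_)
        rw [← hs, S.parent_shift]
      rw [hAe, map_zero, hφ]
      simp [h]
  · -- adjoint identity
    intro G hG hGHS
    unfold hsInner
    set h : T → ℂ := fun t =>
      ⟪G (lp.single 2 t 1), ((F - F0) ∘L A j) (lp.single 2 t 1)⟫_ℂ with hh
    have hsupp : Function.support h ⊆ Set.range (S.shift j) := by
      intro t ht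
      by_contra hr
      have hz : A j (lp.single 2 t 1) = 0 :=
        A_single_zero S hA j (fun s hs => hr ⟨s, hs⟩)
      apply ht
      rw [hh]
      simp [ContinuousLinearMap.comp_apply, hz]
    have key : ∀ s : T, ⟪(G ∘L adjoint (A j)) (lp.single 2 s 1), F (lp.single 2 s 1)⟫_ℂ
        = h (S.shift j s) := by
      intro s
      rw [hh]
      simp only [ContinuousLinearMap.comp_apply, adj_single S hA, A_single S hA]
      rw [ContinuousLinearMap.sub_apply, inner_sub_right]
      have hzero : ⟪G (lp.single 2 (S.shift j s) 1), F0 (lp.single 2 s 1)⟫_ℂ = 0 := by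
        refine inner_eq_zero_of _ _ (fun u => ?_)
        by_cases hh' : S.horo u s
        · exact Or.inl (causal_single_eq_zero hG (not_ple_shift S j hh'))
        · exact Or.inr ((hF0 s u).2 hh')
      rw [hzero, sub_zero]
    rw [tsum_congr key]
    exact Function.Injective.tsum_eq hinj hsupp
  · -- Cuntz consequence
    intro i
    rw [ContinuousLinearMap.comp_assoc, hCuntz₁ j i]
    by_cases h : i = j
    · subst h
      rw [if_pos rfl, if_pos rfl, ContinuousLinearMap.one_def, ContinuousLinearMap.comp_id]
    · rw [if_neg (fun hc => h hc.symm), if_neg h, ContinuousLinearMap.comp_zero]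
end Multiscale
end
end
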